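/- arXiv:1706.05533 — 6 statements merged into one kernel-verified Lean document; each statement's English description precedes it below -/
import Mathlib

section
/- Let φ : [0,∞) → [0,∞) be concave with φ(1) = 1, differentiable on (0,1) with nonnegative derivative there. Then for all x ≥ 0, exp(-φ(x)) + φ(1 - exp(-x)) ≥ 1. -/
/-!
Put t = 1 - e^{-x}, so that 0 < t ≤ min(x, 1). Concavity together with φ(0) ≥ 0 makes φ(y)/y
decreasing, hence c := φ(t)/t ≥ φ(1) = 1 and φ(x) ≤ c x. Bernoulli's inequality for the exponent
c ≥ 1 then gives e^{-φ(x)} ≥ e^{-cx} = (1 - t)^c ≥ 1 - c t = 1 - φ(t).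
-/

open Real Set

lemma concaveOn_Ici_of_forall_le {f : ℝ → ℝ}
    (hf : ∀ a b l : ℝ, 0 ≤ a → 0 ≤ b → 0 ≤ l → l ≤ 1 →
      l * f a + (1 - l) * f b ≤ f (l * a + (1 - l) * b)) :
    ConcaveOn ℝ (Ici 0) f := by
  refine ⟨convex_Ici 0, fun a ha b hb l m hl hm hlm => ?_⟩
  obtain rfl : m = 1 - l := by linarith
  exact hf a b l ha hb hl (by linarith)

lemma ConcaveOn.antitoneOn_div_self {f : ℝ → ℝ} (hf : ConcaveOn ℝ (Ici 0) f) (h0 : 0 ≤ f 0) :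
    AntitoneOn (fun x => f x / x) (Ioi 0) := by
  intro t (ht : 0 < t) x (hx : 0 < x) htx
  have hl : t / x ≤ 1 := (div_le_one hx).2 htx
  have key : t / x * f x ≤ f t :=
    calc t / x * f x ≤ t / x * f x + (1 - t / x) * f 0 :=
          le_add_of_nonneg_right (mul_nonneg (sub_nonneg.2 hl) h0)
      _ ≤ f (t / x * x + (1 - t / x) * 0) :=
          hf.2 hx.le (mem_Ici.2 le_rfl) (by positivity) (sub_nonneg.2 hl) (add_sub_cancel _ _)
      _ = f t := by rw [div_mul_cancel₀ _ hx.ne', mul_zero, add_zero]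
  rw [div_mul_eq_mul_div, div_le_iff₀ hx] at key
  rw [div_le_div_iff₀ hx ht]
  linarith

lemma one_sub_mul_one_sub_exp_neg_le {c : ℝ} (hc : 1 ≤ c) (x : ℝ) :
    1 - c * (1 - exp (-x)) ≤ exp (-(c * x)) := by
  have h := one_add_mul_self_le_rpow_one_add (s := exp (-x) - 1) (by linarith [exp_pos (-x)]) hc
  rw [add_sub_cancel, ← exp_mul] at h
  convert h using 1 <;> ring_nf

theorem exp_phi_inequality_general (φ : ℝ → ℝ)
    (hconc : ∀ a b l : ℝ, 0 ≤ a → 0 ≤ b → 0 ≤ l → l ≤ 1 →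
      l * φ a + (1 - l) * φ b ≤ φ (l * a + (1 - l) * b))
    (hnn : ∀ x : ℝ, 0 ≤ x → 0 ≤ φ x)
    (hφ1 : φ 1 = 1) :
    ∀ x : ℝ, 0 ≤ x → 1 ≤ Real.exp (-φ x) + φ (1 - Real.exp (-x)) := by
  intro x hx
  rcases hx.eq_or_lt with rfl | hx
  · simp only [neg_zero, exp_zero, sub_self]
    linarith [add_one_le_exp (-φ 0)]
  set t := 1 - exp (-x) with ht
  have ht0 : 0 < t := by linarith [exp_lt_one_iff.2 (neg_lt_zero.2 hx)]
  have ht1 : t ≤ 1 := by linarith [exp_pos (-x)]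
  have htx : t ≤ x := by linarith [add_one_le_exp (-x)]
  have hslope := (concaveOn_Ici_of_forall_le hconc).antitoneOn_div_self (hnn 0 le_rfl)
  have hc : 1 ≤ φ t / t := by
    simpa [hφ1] using hslope ht0 (mem_Ioi.2 one_pos) ht1
  have hφx : φ x ≤ φ t / t * x := (div_le_iff₀ hx).1 (hslope ht0 hx htx)
  calc 1 = 1 - φ t / t * t + φ t := by field_simp; ring
    _ ≤ exp (-(φ t / t * x)) + φ t := by
        gcongr; exact one_sub_mul_one_sub_exp_neg_le hc x
    _ ≤ exp (-φ x) + φ t := by gcongr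

theorem exp_phi_inequality (φ φ' : ℝ → ℝ)
    (hconc : ∀ a b l : ℝ, 0 ≤ a → 0 ≤ b → 0 ≤ l → l ≤ 1 →
      l * φ a + (1 - l) * φ b ≤ φ (l * a + (1 - l) * b))
    (hnn : ∀ x : ℝ, 0 ≤ x → 0 ≤ φ x)
    (hφ1 : φ 1 = 1)
    (hderiv : ∀ x : ℝ, 0 < x → x < 1 → HasDerivAt φ (φ' x) x)
    (hderiv_nonneg : ∀ x : ℝ, 0 < x → x < 1 → 0 ≤ φ' x) :
    ∀ x : ℝ, 0 ≤ x → 1 ≤ Real.exp (-φ x) + φ (1 - Real.exp (-x)) :=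
  exp_phi_inequality_general φ hconc hnn hφ1
end

section
/- Let φ(x) = b·x + ∫_{(0,∞)} (1 - e^{-xy}) ν(dy) with φ(1) = 1, and let R be a random variable on the positive integers with P(R = m) = c(φ,m), where c(φ,m) = (1/m!)∫ y^m e^{-y} ν(dy) + b·1_{m=1}. Then for all t ≥ 0, E[e^{-tR}] = 1 - φ(1 - e^{-t}). -/
/-!
Put `s = e^{-t}`, so that `E[e^{-tR}] = ∑_{m ≥ 1} c(φ,m) s^m`. Summing the exponential series
under the integral, `∑_{m ≥ 1} (sy)^m e^{-y} / m! = e^{-(1-s)y} - e^{-y}`, the exchange being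
justified by dominated convergence because the terms are nonnegative and their sum is
`(1 - e^{-y}) - (1 - e^{-(1-s)y})`, integrable against `ν` on `(0,∞)` because
`1 - e^{-xy} ≤ max 1 x * min 1 y`.
Hence `E[e^{-tR}] = bs + (φ(1) - b) - (φ(1-s) - b(1-s)) = 1 - φ(1-s)`.
-/

open MeasureTheory Set

theorem integral_comp_eq_tsum_measureReal_preimage {Ω α E : Type*} [MeasurableSpace Ω]
    [MeasurableSpace α] [Countable α] [MeasurableSingletonClass α]
    [NormedAddCommGroup E] [NormedSpace ℝ E] [CompleteSpace E]
    {μ : Measure Ω} {R : Ω → α} (hR : Measurable R) {f : α → E} (hf : Integrable f (μ.map R)) :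
    ∫ ω, f (R ω) ∂μ = ∑' a, μ.real (R ⁻¹' {a}) • f a := by
  rw [← integral_map hR.aemeasurable hf.aestronglyMeasurable, integral_countable hf]
  simp_rw [map_measureReal_apply hR (measurableSet_singleton _)]

namespace Real

theorem one_sub_exp_neg_mul_le {x y : ℝ} (hy : 0 ≤ y) :
    1 - exp (-x * y) ≤ max 1 x * min 1 y := by
  have h_le_one : 1 - exp (-x * y) ≤ 1 := by linarith [exp_pos (-x * y)]
  have h_le_mul : 1 - exp (-x * y) ≤ x * y := by linarith [add_one_le_exp (-x * y)]
  rcases le_total y 1 with hy1 | hy1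
  · rw [min_eq_right hy1]
    exact h_le_mul.trans (mul_le_mul_of_nonneg_right (le_max_right 1 x) hy)
  · rw [min_eq_left hy1, mul_one]
    exact h_le_one.trans (le_max_left 1 x)

theorem one_sub_exp_neg_mul_nonneg {x y : ℝ} (hx : 0 ≤ x) (hy : 0 ≤ y) :
    0 ≤ 1 - exp (-x * y) := by
  rw [sub_nonneg, exp_le_one_iff]
  nlinarith

theorem hasSum_pow_succ_div_factorial_mul_exp_neg (s y : ℝ) :
    HasSum (fun n : ℕ => (s * y) ^ (n + 1) / (n + 1).factorial * exp (-y))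
      (exp (-(1 - s) * y) - exp (-y)) := by
  have h := (hasSum_nat_add_iff' 1).mpr (NormedSpace.expSeries_div_hasSum_exp (s * y))
  rw [← exp_eq_exp_ℝ] at h
  have h_value : exp (-(1 - s) * y) - exp (-y)
      = (exp (s * y) - ∑ i ∈ Finset.range 1, (s * y) ^ i / i.factorial) * exp (-y) := by
    rw [Finset.sum_range_one, pow_zero, Nat.factorial_zero, Nat.cast_one, div_one, sub_mul,
      one_mul, ← exp_add]
    ring_nf
  rw [h_value]
  exact h.mul_right _

end Real

open Real

section LevyMeasure

variable {ν : Measure ℝ}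

theorem integrable_min_one_of_lintegral_ne_top
    (hν : ∫⁻ y in Ioi (0:ℝ), ENNReal.ofReal (min 1 y) ∂ν ≠ ⊤) :
    Integrable (fun y => min 1 y) (ν.restrict (Ioi 0)) := by
  refine ⟨(continuous_const.min continuous_id).aestronglyMeasurable, ?_⟩
  rw [hasFiniteIntegral_iff_ofReal]
  · exact hν.lt_top
  · filter_upwards [ae_restrict_mem measurableSet_Ioi] with y hy
    exact le_min zero_le_one hy.le

theorem integrable_one_sub_exp_neg_mul
    (hν : ∫⁻ y in Ioi (0:ℝ), ENNReal.ofReal (min 1 y) ∂ν ≠ ⊤) {x : ℝ} (hx : 0 ≤ x) :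
    Integrable (fun y => 1 - exp (-x * y)) (ν.restrict (Ioi 0)) := by
  refine ((integrable_min_one_of_lintegral_ne_top hν).const_mul (max 1 x)).mono'
    (by fun_prop) ?_
  filter_upwards [ae_restrict_mem measurableSet_Ioi] with y (hy : 0 < y)
  rw [norm_of_nonneg (one_sub_exp_neg_mul_nonneg hx hy.le)]
  exact one_sub_exp_neg_mul_le hy.le

theorem hasSum_integral_pow_mul_exp_neg
    (hν : ∫⁻ y in Ioi (0:ℝ), ENNReal.ofReal (min 1 y) ∂ν ≠ ⊤) {s : ℝ} (hs0 : 0 ≤ s)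
    (hs1 : s ≤ 1) :
    HasSum
      (fun n : ℕ => s ^ (n + 1) / (n + 1).factorial * ∫ y in Ioi 0, y ^ (n + 1) * exp (-y) ∂ν)
      (∫ y in Ioi 0, (exp (-(1 - s) * y) - exp (-y)) ∂ν) := by
  set F : ℕ → ℝ → ℝ := fun n y => (s * y) ^ (n + 1) / (n + 1).factorial * exp (-y)
  have hF_nonneg : ∀ n, ∀ᵐ y ∂ν.restrict (Ioi 0), 0 ≤ F n y := fun n => by
    filter_upwards [ae_restrict_mem measurableSet_Ioi] with y (hy : 0 < y)
    positivity
  have hG_int : Integrable (fun y => exp (-(1 - s) * y) - exp (-y)) (ν.restrict (Ioi 0)) := by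
    convert (integrable_one_sub_exp_neg_mul hν zero_le_one).sub
      (integrable_one_sub_exp_neg_mul hν (sub_nonneg.mpr hs1)) using 1
    funext y
    simp only [Pi.sub_apply]
    ring_nf
  have hF_sum := hasSum_pow_succ_div_factorial_mul_exp_neg s
  have hF := hasSum_integral_of_dominated_convergence F (fun n => by fun_prop)
    (fun n => (hF_nonneg n).mono fun y hy => (norm_of_nonneg hy).le)
    (ae_of_all _ fun y => (hF_sum y).summable)
    (hG_int.congr (ae_of_all _ fun y => (hF_sum y).tsum_eq.symm)) (ae_of_all _ hF_sum)
  have h_terms : ∀ n : ℕ,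
      s ^ (n + 1) / (n + 1).factorial * ∫ y in Ioi 0, y ^ (n + 1) * exp (-y) ∂ν
        = ∫ y in Ioi 0, F n y ∂ν := fun n => by
    rw [← integral_const_mul]
    congr 1 with y
    simp only [F, mul_pow]
    ring
  simpa only [h_terms] using hF

theorem one_sub_apply_one_sub_eq_integral
    (hν : ∫⁻ y in Ioi (0:ℝ), ENNReal.ofReal (min 1 y) ∂ν ≠ ⊤) {b : ℝ} {φ : ℝ → ℝ}
    (hφ : ∀ x : ℝ, 0 ≤ x → φ x = b * x + ∫ y in Ioi (0:ℝ), (1 - exp (-x * y)) ∂ν)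
    (hφ1 : φ 1 = 1) {s : ℝ} (hs1 : s ≤ 1) :
    1 - φ (1 - s) = b * s + ∫ y in Ioi 0, (exp (-(1 - s) * y) - exp (-y)) ∂ν := by
  have h_integral : ∫ y in Ioi 0, (exp (-(1 - s) * y) - exp (-y)) ∂ν
      = (∫ y in Ioi 0, (1 - exp (-1 * y)) ∂ν) - ∫ y in Ioi 0, (1 - exp (-(1 - s) * y)) ∂ν := by
    rw [← integral_sub (integrable_one_sub_exp_neg_mul hν zero_le_one)
      (integrable_one_sub_exp_neg_mul hν (sub_nonneg.mpr hs1))]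
    congr 1 with y
    ring_nf
  have hφ_one := hφ 1 zero_le_one
  rw [h_integral, hφ (1 - s) (sub_nonneg.mpr hs1)]
  linarith

theorem hasSum_coeff_mul_pow_succ
    (hν : ∫⁻ y in Ioi (0:ℝ), ENNReal.ofReal (min 1 y) ∂ν ≠ ⊤) {b : ℝ} {c : ℕ → ℝ}
    (hc : ∀ m : ℕ, 1 ≤ m → c m =
      (1 / (Nat.factorial m : ℝ)) * ∫ y in Ioi (0:ℝ), y ^ m * exp (-y) ∂ν
        + if m = 1 then b else 0)
    {s : ℝ} (hs0 : 0 ≤ s) (hs1 : s ≤ 1) :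
    HasSum (fun n : ℕ => c (n + 1) * s ^ (n + 1))
      (b * s + ∫ y in Ioi 0, (exp (-(1 - s) * y) - exp (-y)) ∂ν) := by
  have h_terms : ∀ n : ℕ, c (n + 1) * s ^ (n + 1) = s ^ (n + 1) / (n + 1).factorial *
      (∫ y in Ioi 0, y ^ (n + 1) * exp (-y) ∂ν) + if n = 0 then b * s else 0 := fun n => by
    rw [hc (n + 1) n.succ_pos]
    rcases n with _ | n
    · norm_num
      ring
    · rw [if_neg (by omega), if_neg (by omega)]
      ring
  simpa only [h_terms, add_comm (b * s)] using
    (hasSum_integral_pow_mul_exp_neg hν hs0 hs1).add (hasSum_ite_eq 0 (b * s))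

end LevyMeasure

theorem laplace_transform_R (b : ℝ) (hb : 0 ≤ b) (ν : Measure ℝ)
    (hν : ∫⁻ y in Ioi (0:ℝ), ENNReal.ofReal (min 1 y) ∂ν ≠ ⊤)
    (φ : ℝ → ℝ)
    (hφ : ∀ x : ℝ, 0 ≤ x → φ x = b * x + ∫ y in Ioi (0:ℝ), (1 - Real.exp (-x * y)) ∂ν)
    (hφ1 : φ 1 = 1)
    (c : ℕ → ℝ)
    (hc : ∀ m : ℕ, 1 ≤ m → c m =
      (1 / (Nat.factorial m : ℝ)) * ∫ y in Ioi (0:ℝ), y ^ m * Real.exp (-y) ∂ν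
        + if m = 1 then b else 0)
    {Ω : Type*} [MeasurableSpace Ω] (μ : Measure Ω) [IsProbabilityMeasure μ]
    (R : Ω → ℕ) (hR : Measurable R) (hRpos : ∀ ω, 1 ≤ R ω)
    (hRlaw : ∀ m : ℕ, 1 ≤ m → μ {ω | R ω = m} = ENNReal.ofReal (c m)) :
    ∀ t : ℝ, 0 ≤ t →
      ∫ ω, Real.exp (-t * (R ω : ℝ)) ∂μ = 1 - φ (1 - Real.exp (-t)) := by
  intro t ht
  set s := exp (-t)
  have hs0 : 0 ≤ s := (exp_pos _).le
  have hs1 : s ≤ 1 := exp_le_one_iff.mpr (neg_nonpos.mpr ht)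
  have h_pow : ∀ ω, exp (-t * R ω) = s ^ R ω := fun ω => by
    rw [← exp_nat_mul]
    ring_nf
  have h_law_zero : μ.real (R ⁻¹' {0}) = 0 := by
    rw [measureReal_def, show R ⁻¹' {0} = ∅ from eq_empty_of_forall_notMem
      fun ω h => Nat.one_le_iff_ne_zero.mp (hRpos ω) h, measure_empty, ENNReal.toReal_zero]
  have h_law_succ : ∀ n : ℕ, μ.real (R ⁻¹' {n + 1}) = c (n + 1) := fun n => by
    have hc_nonneg : 0 ≤ c (n + 1) := by
      rw [hc (n + 1) n.succ_pos]
      have h_moment := setIntegral_nonneg (μ := ν) measurableSet_Ioi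
        fun y (hy : 0 < y) => mul_nonneg (pow_nonneg hy.le (n + 1)) (exp_pos (-y)).le
      split_ifs <;> positivity
    rw [measureReal_def, ← ENNReal.toReal_ofReal hc_nonneg, ← hRlaw (n + 1) n.succ_pos]
    rfl
  have h_sum : HasSum (fun n => μ.real (R ⁻¹' {n}) * s ^ n) (1 - φ (1 - s)) := by
    rw [← hasSum_nat_add_iff' 1]
    simpa [h_law_zero, h_law_succ, one_sub_apply_one_sub_eq_integral hν hφ hφ1 hs1] using
      hasSum_coeff_mul_pow_succ hν hc hs0 hs1
  have h_int : Integrable (fun n : ℕ => s ^ n) (μ.map R) :=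
    .of_bound (by fun_prop) 1 (ae_of_all _ fun n => by
      rw [norm_of_nonneg (pow_nonneg hs0 n)]; exact pow_le_one₀ hs0 hs1)
  simp_rw [h_pow]
  rw [integral_comp_eq_tsum_measureReal_preimage hR h_int, ← h_sum.tsum_eq]
  simp only [smul_eq_mul]
end

section
/- Let φ(x) = b·x + ∫_{(0,∞)} (1 - e^{-xy}) ν(dy) be a Bernstein function with φ(1) = 1, and let R be a random variable with P(R = m) = c(φ,m) as above. Then for all t ≥ 0, E[e^{-tR}] ≤ e^{-φ(t)}. -/
/-!
With `s = e^{-t}`, summing the exponential series under the integral gives the generating function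
`E[s^R] = ∑ c(φ,m) s^m = b s + ∫ (e^{-(1-s)y} - e^{-y}) ν(dy) = 1 - φ(1 - s)`, so it remains to show
`φ(u) ≥ 1 - e^{-φ(t)}` for `u = 1 - e^{-t}`. As every `x ↦ 1 - e^{-xy}` is concave and vanishes
at `0`, `φ(x)/x` is nonincreasing. If `φ(t) ≤ t`, comparing `u ≤ 1` with `φ(1) = 1` gives
`φ(u) ≥ u = 1 - e^{-t} ≥ 1 - e^{-φ(t)}`. Otherwise comparing `u ≤ t` gives `φ(u) ≥ u φ(t)/t`, and
`u φ(t)/t ≥ 1 - e^{-φ(t)}` is the same slope monotonicity for `1 - e^{-x}` between `t` and `φ(t)`.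
-/

open MeasureTheory Set

lemma mul_one_sub_exp_neg_le {x y : ℝ} (hx : 0 ≤ x) (hxy : x ≤ y) :
    x * (1 - Real.exp (-y)) ≤ y * (1 - Real.exp (-x)) := by
  rcases hx.eq_or_lt with rfl | hx
  · simp
  have hy : 0 < y := hx.trans_le hxy
  have h := convexOn_exp.secant_mono (a := 0) (x := -y) (y := -x) trivial trivial trivial
    (by linarith) (by linarith) (by linarith)
  rw [Real.exp_zero, sub_zero, sub_zero, div_neg, div_neg, neg_le_neg_iff,
    div_le_div_iff₀ hx hy] at h
  linarith

lemma one_sub_apply_one_sub_exp_neg_le_exp_neg {φ : ℝ → ℝ}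
    (hφ : ∀ u t, 0 ≤ u → u ≤ t → u * φ t ≤ t * φ u) (hφ1 : φ 1 = 1) {t : ℝ} (ht : 0 ≤ t) :
    1 - φ (1 - Real.exp (-t)) ≤ Real.exp (-φ t) := by
  set u := 1 - Real.exp (-t)
  have hu : 0 ≤ u := by simp only [u, sub_nonneg, Real.exp_le_one_iff]; linarith
  have hut : u ≤ t := by linarith [Real.add_one_le_exp (-t)]
  rcases le_total (φ t) t with hφt | hφt
  · have h := hφ u 1 hu (by linarith [Real.exp_pos (-t)])
    rw [hφ1, mul_one, one_mul] at h
    linarith [Real.exp_le_exp.2 (neg_le_neg hφt)]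
  rcases ht.eq_or_lt with rfl | ht
  · simp only [u, neg_zero, Real.exp_zero, sub_self]
    linarith [Real.add_one_le_exp (-φ 0)]
  have h := mul_one_sub_exp_neg_le ht.le hφt
  have h' := hφ u t hu hut
  have : t * (1 - Real.exp (-φ t)) ≤ t * φ u := by linarith
  linarith [le_of_mul_le_mul_left this ht]

lemma one_sub_exp_neg_mul_le {x y : ℝ} (hy : 0 ≤ y) :
    1 - Real.exp (-x * y) ≤ max 1 x * min 1 y := by
  have hexp := Real.add_one_le_exp (-x * y)
  rcases le_total y 1 with h | h
  · rw [min_eq_right h]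
    nlinarith [le_max_right 1 x]
  · rw [min_eq_left h, mul_one]
    linarith [Real.exp_pos (-x * y), le_max_left 1 x]

lemma hasSum_pow_succ_div_factorial_mul_exp_neg (s y : ℝ) :
    HasSum (fun n : ℕ => (s * y) ^ (n + 1) / ((n + 1).factorial : ℝ) * Real.exp (-y))
      ((1 - Real.exp (-1 * y)) - (1 - Real.exp (-(1 - s) * y))) := by
  have h := ((hasSum_nat_add_iff' 1).2
    (NormedSpace.expSeries_div_hasSum_exp (s * y))).mul_right (Real.exp (-y))
  rw [← congrFun Real.exp_eq_exp_ℝ, Finset.sum_range_one, pow_zero, Nat.factorial_zero,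
    Nat.cast_one, div_one, sub_mul, one_mul, ← Real.exp_add] at h
  rwa [show (1 - Real.exp (-1 * y)) - (1 - Real.exp (-(1 - s) * y))
    = Real.exp (s * y + -y) - Real.exp (-y) by ring_nf]

section LevyMeasure

variable {ν : Measure ℝ} (hν : ∫⁻ y in Ioi (0:ℝ), ENNReal.ofReal (min 1 y) ∂ν ≠ ⊤)
include hν

lemma integrableOn_one_sub_exp_neg_mul {x : ℝ} (hx : 0 ≤ x) :
    IntegrableOn (fun y => 1 - Real.exp (-x * y)) (Ioi 0) ν := by
  have hmin : IntegrableOn (fun y : ℝ => min 1 y) (Ioi 0) ν :=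
    ⟨by fun_prop, (hasFiniteIntegral_iff_ofReal <| (ae_restrict_iff' measurableSet_Ioi).2 <|
      .of_forall fun y (hy : 0 < y) => le_min zero_le_one hy.le).2 hν.lt_top⟩
  refine (hmin.const_mul (max 1 x)).mono' (by fun_prop) ?_
  refine (ae_restrict_iff' measurableSet_Ioi).2 (.of_forall fun y (hy : 0 < y) => ?_)
  have hpos : 0 ≤ 1 - Real.exp (-x * y) := by
    rw [sub_nonneg, Real.exp_le_one_iff]; nlinarith
  rw [Real.norm_of_nonneg hpos]
  exact one_sub_exp_neg_mul_le hy.le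

lemma hasSum_integral_pow_succ_div_factorial {s : ℝ} (hs0 : 0 ≤ s) (hs1 : s ≤ 1) :
    HasSum (fun n : ℕ =>
        ∫ y in Ioi (0:ℝ), (s * y) ^ (n + 1) / ((n + 1).factorial : ℝ) * Real.exp (-y) ∂ν)
      (∫ y in Ioi (0:ℝ), (1 - Real.exp (-1 * y)) - (1 - Real.exp (-(1 - s) * y)) ∂ν) := by
  have hnonneg (n : ℕ) : ∀ᵐ y ∂ν.restrict (Ioi 0),
      0 ≤ (s * y) ^ (n + 1) / ((n + 1).factorial : ℝ) * Real.exp (-y) :=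
    (ae_restrict_iff' measurableSet_Ioi).2 (.of_forall fun y (hy : 0 < y) => by positivity)
  -- the terms are nonnegative, so they dominate themselves
  refine hasSum_integral_of_dominated_convergence _ (fun n => by fun_prop)
    (fun n => (hnonneg n).mono fun y hy => (Real.norm_of_nonneg hy).le)
    (.of_forall fun y => (hasSum_pow_succ_div_factorial_mul_exp_neg s y).summable) ?_
    (.of_forall (hasSum_pow_succ_div_factorial_mul_exp_neg s))
  simp only [fun y => (hasSum_pow_succ_div_factorial_mul_exp_neg s y).tsum_eq]
  exact (integrableOn_one_sub_exp_neg_mul hν zero_le_one).sub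
    (integrableOn_one_sub_exp_neg_mul hν (sub_nonneg.2 hs1))

variable {b : ℝ} {φ : ℝ → ℝ}
  (hφ : ∀ x : ℝ, 0 ≤ x → φ x = b * x + ∫ y in Ioi (0:ℝ), (1 - Real.exp (-x * y)) ∂ν)
include hφ

lemma mul_bernstein_le_mul_bernstein (u t : ℝ) (hu : 0 ≤ u) (hut : u ≤ t) : u * φ t ≤ t * φ u := by
  have ht := hu.trans hut
  have hint : ∫ y in Ioi (0:ℝ), u * (1 - Real.exp (-t * y)) ∂ν
      ≤ ∫ y in Ioi (0:ℝ), t * (1 - Real.exp (-u * y)) ∂ν := by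
    refine setIntegral_mono_on ((integrableOn_one_sub_exp_neg_mul hν ht).const_mul u)
      ((integrableOn_one_sub_exp_neg_mul hν hu).const_mul t) measurableSet_Ioi
      fun y (hy : 0 < y) => ?_
    have h := mul_one_sub_exp_neg_le (mul_nonneg hu hy.le) (mul_le_mul_of_nonneg_right hut hy.le)
    rw [neg_mul, neg_mul]
    refine le_of_mul_le_mul_right ?_ hy
    linarith
  rw [integral_const_mul, integral_const_mul] at hint
  rw [hφ u hu, hφ t ht]
  nlinarith

variable (hφ1 : φ 1 = 1) {c : ℕ → ℝ}
  (hc : ∀ m : ℕ, 1 ≤ m → c m =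
    (1 / (Nat.factorial m : ℝ)) * ∫ y in Ioi (0:ℝ), y ^ m * Real.exp (-y) ∂ν
      + if m = 1 then b else 0)
include hφ1 hc

lemma hasSum_coeff_mul_pow {s : ℝ} (hs0 : 0 ≤ s) (hs1 : s ≤ 1) :
    HasSum (fun n : ℕ => c (n + 1) * s ^ (n + 1)) (1 - φ (1 - s)) := by
  have hsum := (hasSum_integral_pow_succ_div_factorial hν hs0 hs1).add (hasSum_ite_eq 0 (b * s))
  rw [integral_sub (integrableOn_one_sub_exp_neg_mul hν zero_le_one)
    (integrableOn_one_sub_exp_neg_mul hν (sub_nonneg.2 hs1))] at hsum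
  convert hsum using 1
  · ext n
    rw [hc (n + 1) n.succ_pos, add_mul]
    congr 1
    · rw [← integral_const_mul, ← integral_mul_const]
      congr 1 with y
      ring
    · split_ifs <;> simp_all
  · have h1 := hφ 1 zero_le_one
    have hs := hφ (1 - s) (sub_nonneg.2 hs1)
    linarith

lemma integral_exp_neg_mul_eq (hb : 0 ≤ b)
    {Ω : Type*} [MeasurableSpace Ω] {μ : Measure Ω} [IsProbabilityMeasure μ]
    {R : Ω → ℕ} (hR : Measurable R) (hRpos : ∀ ω, 1 ≤ R ω)
    (hRlaw : ∀ m : ℕ, 1 ≤ m → μ {ω | R ω = m} = ENNReal.ofReal (c m)) {t : ℝ} (ht : 0 ≤ t) :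
    ∫ ω, Real.exp (-t * (R ω : ℝ)) ∂μ = 1 - φ (1 - Real.exp (-t)) := by
  have hc_nonneg {m : ℕ} (hm : 1 ≤ m) : 0 ≤ c m := by
    rw [hc m hm]
    refine add_nonneg (mul_nonneg (by positivity) ?_) (by split_ifs <;> simp [hb])
    exact setIntegral_nonneg measurableSet_Ioi fun y (hy : 0 < y) => by positivity
  have hlaw (n : ℕ) : (μ.map R).real {n} = if n = 0 then 0 else c n := by
    rw [map_measureReal_apply hR (measurableSet_singleton n), measureReal_def]
    split_ifs with hn
    · simp [hn, Set.preimage, fun ω => Nat.one_le_iff_ne_zero.1 (hRpos ω)]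
    · exact (congrArg ENNReal.toReal (hRlaw n (Nat.one_le_iff_ne_zero.2 hn))).trans
        (ENNReal.toReal_ofReal (hc_nonneg (Nat.one_le_iff_ne_zero.2 hn)))
  have hbound : ∀ᵐ n : ℕ ∂μ.map R, ‖Real.exp (-t * (n : ℝ))‖ ≤ 1 := .of_forall fun n => by
    rw [Real.norm_of_nonneg (Real.exp_pos _).le, Real.exp_le_one_iff]
    nlinarith [n.cast_nonneg (α := ℝ)]
  rw [← integral_map (f := fun n : ℕ => Real.exp (-t * n)) hR.aemeasurable
      measurable_from_top.aestronglyMeasurable,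
    integral_countable (.of_bound measurable_from_top.aestronglyMeasurable 1 hbound)]
  have hpow (n : ℕ) : Real.exp (-t * ↑(n + 1)) = Real.exp (-t) ^ (n + 1) := by
    rw [← Real.exp_nat_mul]; ring_nf
  refine HasSum.tsum_eq ((hasSum_nat_add_iff' 1).1 ?_)
  simp only [Finset.sum_range_one, hlaw, if_pos, smul_eq_mul, zero_mul, sub_zero,
    Nat.add_one_ne_zero, if_false, hpow]
  exact hasSum_coeff_mul_pow hν hφ hφ1 hc (Real.exp_pos (-t)).le
    (Real.exp_le_one_iff.2 (neg_nonpos.2 ht))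

end LevyMeasure

theorem laplace_transform_R_le (b : ℝ) (hb : 0 ≤ b) (ν : Measure ℝ)
    (hν : ∫⁻ y in Ioi (0:ℝ), ENNReal.ofReal (min 1 y) ∂ν ≠ ⊤)
    (φ : ℝ → ℝ)
    (hφ : ∀ x : ℝ, 0 ≤ x → φ x = b * x + ∫ y in Ioi (0:ℝ), (1 - Real.exp (-x * y)) ∂ν)
    (hφ1 : φ 1 = 1)
    (c : ℕ → ℝ)
    (hc : ∀ m : ℕ, 1 ≤ m → c m =
      (1 / (Nat.factorial m : ℝ)) * ∫ y in Ioi (0:ℝ), y ^ m * Real.exp (-y) ∂ν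
        + if m = 1 then b else 0)
    {Ω : Type*} [MeasurableSpace Ω] (μ : Measure Ω) [IsProbabilityMeasure μ]
    (R : Ω → ℕ) (hR : Measurable R) (hRpos : ∀ ω, 1 ≤ R ω)
    (hRlaw : ∀ m : ℕ, 1 ≤ m → μ {ω | R ω = m} = ENNReal.ofReal (c m)) :
    ∀ t : ℝ, 0 ≤ t →
      ∫ ω, Real.exp (-t * (R ω : ℝ)) ∂μ ≤ Real.exp (-φ t) := by
  intro t ht
  rw [integral_exp_neg_mul_eq hν hφ hφ1 hc hb hR hRpos hRlaw ht]
  exact one_sub_apply_one_sub_exp_neg_le_exp_neg (mul_bernstein_le_mul_bernstein hν hφ) hφ1 ht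
end

section
/- For every γ > 0 and x > 0, log^{-γ}(1+x) = (1/Γ(γ)) ∫_0^∞ e^{-xt} e^{-t} (∫_0^∞ t^{s-1} s^{γ-1} / Γ(s) ds) dt; in particular, x ↦ (log(1+x))^{-γ} is completely monotone on (0,∞). -/
open MeasureTheory Set
open scoped ENNReal

namespace LogCMAux

lemma gammaContOn : ContinuousOn Real.Gamma (Ioi 0) := fun s hs =>
  (Real.differentiableAt_Gamma fun m =>
    (lt_of_le_of_lt (neg_nonpos.mpr (Nat.cast_nonneg m)) hs).ne').continuousAt.continuousWithinAt

lemma intOn {a r : ℝ} (ha : 0 < a) (hr : 0 < r) :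
    IntegrableOn (fun t : ℝ => t ^ (a - 1) * Real.exp (-(r * t))) (Ioi 0) := by
  have h0 : IntegrableOn (fun t : ℝ => Real.exp (-(r * t)) * (r * t) ^ (a - 1)) (Ioi 0) := by
    have h := (integrableOn_Ioi_comp_mul_left_iff
        (fun u : ℝ => Real.exp (-u) * u ^ (a - 1)) 0 hr).mpr
    simpa [mul_zero] using h (by simpa using Real.GammaIntegral_convergent ha)
  have h1 : IntegrableOn
      (fun t : ℝ => r ^ (1 - a) * (Real.exp (-(r * t)) * (r * t) ^ (a - 1))) (Ioi 0) :=
    h0.const_mul (r ^ (1 - a))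
  refine h1.congr_fun (fun t ht => ?_) measurableSet_Ioi
  have htp : (0:ℝ) < t := ht
  beta_reduce
  rw [Real.mul_rpow hr.le htp.le]
  have hone : r ^ (1 - a) * r ^ (a - 1) = 1 := by
    rw [← Real.rpow_add hr]; norm_num
  calc r ^ (1-a) * (Real.exp (-(r*t)) * (r ^ (a-1) * t ^ (a-1)))
      = (r ^ (1-a) * r ^ (a-1)) * (t ^ (a-1) * Real.exp (-(r*t))) := by ring
    _ = t ^ (a-1) * Real.exp (-(r*t)) := by rw [hone, one_mul]

lemma masterInt {γ c : ℝ} (hγ : 0 < γ) (hc : 1 < c) (n m : ℕ) :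
    IntegrableOn (fun s : ℝ => (s + n) ^ m * c ^ (-s) * s ^ (γ - 1)) (Ioi 0) := by
  have hc0 : (0:ℝ) < c := lt_trans one_pos hc
  have hlog : 0 < Real.log c := Real.log_pos hc
  have hterm : ∀ k : ℕ, IntegrableOn
      (fun s : ℝ => s ^ k * c ^ (-s) * s ^ (γ - 1)) (Ioi 0) := by
    intro k
    have hint := intOn (a := γ + k) (r := Real.log c) (by positivity) hlog
    refine hint.congr_fun (fun s hs => ?_) measurableSet_Ioi
    have hsp : (0:ℝ) < s := hs
    have h1 : s ^ (γ + (k:ℝ) - 1) = s ^ (k:ℕ) * s ^ (γ - 1) := by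
      rw [show γ + (k:ℝ) - 1 = (k:ℝ) + (γ - 1) by ring, Real.rpow_add hsp, Real.rpow_natCast]
    have h2 : c ^ (-s) = Real.exp (-(Real.log c * s)) := by
      rw [Real.rpow_def_of_pos hc0, mul_neg]
    beta_reduce
    rw [h1, h2]
    ring
  have expand : (fun s : ℝ => (s + n) ^ m * c ^ (-s) * s ^ (γ - 1)) =
      fun s => ∑ k ∈ Finset.range (m + 1),
        ((m.choose k : ℝ) * (n:ℝ) ^ (m - k)) * (s ^ k * c ^ (-s) * s ^ (γ - 1)) := by
    funext s
    rw [add_pow, Finset.sum_mul, Finset.sum_mul]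
    refine Finset.sum_congr rfl fun k _ => by ring
  rw [expand]
  exact integrable_finset_sum _ fun k _ => ((hterm k).const_mul _)

lemma repInt {γ x : ℝ} (hγ : 0 < γ) (hx : 0 < x) :
    ∫ s in Ioi (0:ℝ), (1 + x) ^ (-s) * s ^ (γ - 1) =
      Real.Gamma γ * Real.log (1 + x) ^ (-γ) := by
  have h1x : (1:ℝ) < 1 + x := by linarith
  have h0x : (0:ℝ) < 1 + x := by linarith
  have hL : 0 < Real.log (1 + x) := Real.log_pos h1x
  have step : EqOn (fun s : ℝ => (1 + x) ^ (-s) * s ^ (γ - 1))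
      (fun s : ℝ => s ^ (γ - 1) * Real.exp (-(Real.log (1 + x) * s))) (Ioi 0) := by
    intro s _
    simp only
    rw [Real.rpow_def_of_pos h0x, mul_neg]
    ring
  rw [setIntegral_congr_fun measurableSet_Ioi step,
    Real.integral_rpow_mul_exp_neg_mul_Ioi hγ hL, one_div,
    Real.inv_rpow hL.le, ← Real.rpow_neg hL.le]
  ring

lemma measProd (n : ℕ) : Measurable fun s : ℝ => ∏ i ∈ Finset.range n, (s + (i:ℝ)) :=
  Finset.measurable_prod _ fun i _ => measurable_id.add_const _

lemma measBase {y : ℝ} (hy : 0 < y) (b : ℝ) : Measurable fun s : ℝ => y ^ (-s - b) := by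
  simp only [Real.rpow_def_of_pos hy]
  exact Real.measurable_exp.comp ((measurable_id.neg.sub measurable_const).const_mul _)

lemma measPow (γ : ℝ) : Measurable fun s : ℝ => s ^ (γ - 1) := by measurability

lemma measIntegrand (γ : ℝ) (n : ℕ) {y : ℝ} (hy : 0 < y) (b : ℝ) :
    Measurable fun s : ℝ =>
      (∏ i ∈ Finset.range n, (s + (i:ℝ))) * y ^ (-s - b) * s ^ (γ - 1) :=
  ((measProd n).mul (measBase hy b)).mul (measPow γ)

noncomputable def hfun (γ : ℝ) (n : ℕ) (x : ℝ) : ℝ :=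
  ∫ s in Ioi (0:ℝ), (∏ i ∈ Finset.range n, (s + (i:ℝ))) * (1 + x) ^ (-s - (n:ℝ)) * s ^ (γ - 1)

lemma prodLe {s : ℝ} (hs : 0 < s) (n : ℕ) :
    ∏ i ∈ Finset.range n, (s + (i:ℝ)) ≤ (s + (n:ℝ)) ^ n := by
  calc ∏ i ∈ Finset.range n, (s + (i:ℝ)) ≤ ∏ _i ∈ Finset.range n, (s + (n:ℝ)) := by
        refine Finset.prod_le_prod (fun i _ => by positivity) (fun i hi => ?_)
        have : (i:ℝ) ≤ n := Nat.cast_le.mpr (Finset.mem_range.mp hi).le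
        linarith
    _ = (s + (n:ℝ)) ^ n := by rw [Finset.prod_const, Finset.card_range]

lemma hfun_integrableOn {γ : ℝ} (hγ : 0 < γ) {x : ℝ} (hx : 0 < x) (n : ℕ) :
    IntegrableOn (fun s : ℝ =>
      (∏ i ∈ Finset.range n, (s + (i:ℝ))) * (1 + x) ^ (-s - (n:ℝ)) * s ^ (γ - 1)) (Ioi 0) := by
  have hc : (1:ℝ) < 1 + x := by linarith
  have h0 : (0:ℝ) < 1 + x := by linarith
  have hnn : (0:ℝ) ≤ (n:ℝ) := Nat.cast_nonneg n
  refine Integrable.mono' (masterInt hγ hc n n)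
    ((measIntegrand γ n h0 (n:ℝ)).aestronglyMeasurable) ?_
  refine (ae_restrict_iff' measurableSet_Ioi).mpr (Filter.Eventually.of_forall fun s hs => ?_)
  have hsp : (0:ℝ) < s := hs
  have hprod : 0 ≤ ∏ i ∈ Finset.range n, (s + (i:ℝ)) :=
    Finset.prod_nonneg fun i _ => by positivity
  rw [Real.norm_eq_abs, abs_of_nonneg (mul_nonneg (mul_nonneg hprod
    (Real.rpow_nonneg h0.le _)) (Real.rpow_nonneg hsp.le _))]
  have hA : ∏ i ∈ Finset.range n, (s + (i:ℝ)) ≤ (s + (n:ℝ)) ^ n := prodLe hsp n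
  have hB : (1 + x) ^ (-s - (n:ℝ)) ≤ (1 + x) ^ (-s) :=
    Real.rpow_le_rpow_of_exponent_le hc.le (by have := hnn; linarith)
  refine mul_le_mul_of_nonneg_right ?_ (Real.rpow_nonneg hsp.le _)
  exact mul_le_mul hA hB (Real.rpow_nonneg h0.le _) (by positivity)

lemma hfun_hasDerivAt {γ : ℝ} (hγ : 0 < γ) (n : ℕ) {x₀ : ℝ} (hx₀ : 0 < x₀) :
    HasDerivAt (hfun γ n) (-(hfun γ (n + 1) x₀)) x₀ := by
  have hc : (1:ℝ) < 1 + x₀ / 2 := by linarith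
  have hc0 : (0:ℝ) < 1 + x₀ / 2 := by linarith
  have hε : 0 < x₀ / 2 := by linarith
  have hball : ∀ x ∈ Metric.ball x₀ (x₀ / 2), x₀ / 2 < x := by
    intro x hx
    rw [Metric.mem_ball, Real.dist_eq, abs_sub_lt_iff] at hx
    linarith [hx.2]
  have hnn : (0:ℝ) ≤ (n:ℝ) := Nat.cast_nonneg n
  have key := hasDerivAt_integral_of_dominated_loc_of_deriv_le
    (μ := volume.restrict (Ioi 0)) (x₀ := x₀) (s := Metric.ball x₀ (x₀ / 2))
    (F := fun x s => (∏ i ∈ Finset.range n, (s + (i:ℝ))) * (1 + x) ^ (-s - (n:ℝ)) * s ^ (γ - 1))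
    (F' := fun x s => (∏ i ∈ Finset.range n, (s + (i:ℝ))) *
      ((-s - (n:ℝ)) * (1 + x) ^ (-s - (n:ℝ) - 1)) * s ^ (γ - 1))
    (bound := fun s => (s + (n:ℝ)) ^ (n+1) * (1 + x₀/2) ^ (-s) * s ^ (γ - 1))
    (Metric.ball_mem_nhds x₀ hε) ?_ ?_ ?_ ?_ ?_ ?_
  · have heq : (∫ s in Ioi (0:ℝ), (∏ i ∈ Finset.range n, (s + (i:ℝ))) *
        ((-s - (n:ℝ)) * (1 + x₀) ^ (-s - (n:ℝ) - 1)) * s ^ (γ - 1))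
        = -(hfun γ (n+1) x₀) := by
      rw [hfun, ← integral_neg]
      refine setIntegral_congr_fun measurableSet_Ioi fun s _ => ?_
      rw [Finset.prod_range_succ]
      push_cast
      rw [show -s - ((n:ℝ) + 1) = -s - (n:ℝ) - 1 by ring]
      ring
    have h2 := key.2
    rw [heq] at h2
    exact h2
  · filter_upwards [Ioi_mem_nhds hx₀] with x hx
    exact (measIntegrand γ n (by linarith [mem_Ioi.mp hx] : (0:ℝ) < 1 + x)
      (n:ℝ)).aestronglyMeasurable
  · exact hfun_integrableOn hγ hx₀ n
  · apply Measurable.aestronglyMeasurable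
    refine (Measurable.mul (measProd n) ?_).mul (measPow γ)
    refine (measurable_id.neg.sub measurable_const).mul ?_
    have := measBase (by linarith : (0:ℝ) < 1 + x₀) ((n:ℝ) + 1)
    simpa [sub_sub] using this
  · refine (ae_restrict_iff' measurableSet_Ioi).mpr
      (Filter.Eventually.of_forall fun s hs => ?_)
    intro x hx
    have hsp : (0:ℝ) < s := hs
    have hxp : x₀ / 2 < x := hball x hx
    have h0x : (0:ℝ) < 1 + x := by linarith
    have hcx : (1:ℝ) + x₀/2 ≤ 1 + x := by linarith
    have hprod : 0 ≤ ∏ i ∈ Finset.range n, (s + (i:ℝ)) :=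
      Finset.prod_nonneg fun i _ => by positivity
    rw [Real.norm_eq_abs, abs_mul, abs_mul, abs_of_nonneg hprod,
      abs_of_nonneg (Real.rpow_nonneg hsp.le _), abs_mul,
      abs_of_nonpos (by linarith : -s - (n:ℝ) ≤ 0),
      abs_of_nonneg (Real.rpow_nonneg h0x.le _)]
    have hA : (∏ i ∈ Finset.range n, (s + (i:ℝ))) * (s + (n:ℝ)) ≤ (s + (n:ℝ)) ^ (n+1) := by
      rw [pow_succ]
      exact mul_le_mul_of_nonneg_right (prodLe hsp n) (by positivity)
    have hB : (1 + x) ^ (-s - (n:ℝ) - 1) ≤ (1 + x₀/2) ^ (-s) := by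
      calc (1 + x) ^ (-s - (n:ℝ) - 1) ≤ (1 + x₀/2) ^ (-s - (n:ℝ) - 1) :=
            Real.rpow_le_rpow_of_nonpos hc0 hcx (by linarith)
        _ ≤ (1 + x₀/2) ^ (-s) := Real.rpow_le_rpow_of_exponent_le hc.le (by linarith)
    calc (∏ i ∈ Finset.range n, (s + (i:ℝ))) *
          (-(-s - (n:ℝ)) * (1 + x) ^ (-s - (n:ℝ) - 1)) * s ^ (γ - 1)
        = ((∏ i ∈ Finset.range n, (s + (i:ℝ))) * (s + (n:ℝ))) *
          (1 + x) ^ (-s - (n:ℝ) - 1) * s ^ (γ - 1) := by ring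
      _ ≤ (s + (n:ℝ)) ^ (n+1) * (1 + x₀/2) ^ (-s) * s ^ (γ - 1) := by
          refine mul_le_mul_of_nonneg_right ?_ (Real.rpow_nonneg hsp.le _)
          exact mul_le_mul hA hB (Real.rpow_nonneg h0x.le _) (by positivity)
  · exact masterInt hγ hc n (n+1)
  · refine (ae_restrict_iff' measurableSet_Ioi).mpr
      (Filter.Eventually.of_forall fun s hs => ?_)
    intro x hx
    have hxp : x₀ / 2 < x := hball x hx
    have h0x : (0:ℝ) < 1 + x := by linarith
    have hb : HasDerivAt (fun x : ℝ => 1 + x) 1 x := by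
      simpa using (hasDerivAt_id x).const_add (1:ℝ)
    have h1 : HasDerivAt (fun y : ℝ => y ^ (-s - (n:ℝ)))
        ((-s - (n:ℝ)) * (1 + x) ^ (-s - (n:ℝ) - 1)) (1 + x) :=
      Real.hasDerivAt_rpow_const (Or.inl h0x.ne')
    have h3 : HasDerivAt (fun x : ℝ => (1 + x) ^ (-s - (n:ℝ)))
        ((-s - (n:ℝ)) * (1 + x) ^ (-s - (n:ℝ) - 1)) x := by
      have h4 := h1.comp x hb
      rw [mul_one] at h4
      exact h4
    exact (h3.const_mul _).mul_const _

end LogCMAux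

open LogCMAux

theorem log_neg_pow_completely_monotone (γ : ℝ) (hγ : 0 < γ) :
    (∀ x : ℝ, 0 < x →
      (Real.log (1 + x)) ^ (-γ) =
        (1 / Real.Gamma γ) * ∫ t in Ioi (0:ℝ),
          Real.exp (-x * t) * Real.exp (-t) *
            ∫ s in Ioi (0:ℝ), t ^ (s - 1) * s ^ (γ - 1) / Real.Gamma s) ∧
    (ContDiffOn ℝ (⊤ : ℕ∞) (fun x : ℝ => (Real.log (1 + x)) ^ (-γ)) (Ioi 0)) ∧
    (∀ (n : ℕ) (x : ℝ), 0 < x →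
      0 ≤ (-1 : ℝ) ^ n * iteratedDeriv n (fun x : ℝ => (Real.log (1 + x)) ^ (-γ)) x) := by
  have hΓγ : 0 < Real.Gamma γ := Real.Gamma_pos_of_pos hγ
  refine ⟨?_, ?_, ?_⟩
  · -- Part 1
    intro x hx
    have h0x : (0:ℝ) < 1 + x := by linarith
    have h1x : (1:ℝ) < 1 + x := by linarith
    have hL : 0 < Real.log (1 + x) := Real.log_pos h1x
    set Φ : ℝ × ℝ → ℝ≥0∞ := fun p =>
      ENNReal.ofReal (Real.exp (-((1+x) * p.1)) * p.1 ^ (p.2 - 1) *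
        (p.2 ^ (γ - 1) / Real.Gamma p.2)) with hΦ
    have hcont : ContinuousOn (fun p : ℝ × ℝ => Real.exp (-((1+x) * p.1)) * p.1 ^ (p.2 - 1) *
        (p.2 ^ (γ - 1) / Real.Gamma p.2)) (Ioi 0 ×ˢ Ioi 0) := by
      refine ContinuousOn.mul (ContinuousOn.mul ?_ ?_) (ContinuousOn.div ?_ ?_ ?_)
      · exact (Real.continuous_exp.comp (continuous_const.mul continuous_fst).neg).continuousOn
      · intro p hp
        have h1 : ContinuousAt (fun q : ℝ × ℝ => q.1 ^ q.2) (p.1, p.2 - 1) :=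
          Real.continuousAt_rpow _ (Or.inl (mem_Ioi.mp hp.1).ne')
        have h2 : ContinuousAt (fun p : ℝ × ℝ => (p.1, p.2 - 1)) p :=
          (continuous_fst.prodMk (continuous_snd.sub continuous_const)).continuousAt
        exact (ContinuousAt.comp (f := fun p : ℝ × ℝ => (p.1, p.2 - 1)) h1 h2).continuousWithinAt
      · intro p hp
        have h1 : ContinuousAt (fun q : ℝ × ℝ => q.1 ^ q.2) (p.2, γ - 1) :=
          Real.continuousAt_rpow _ (Or.inl (mem_Ioi.mp hp.2).ne')
        have h2 : ContinuousAt (fun p : ℝ × ℝ => (p.2, γ - 1)) p :=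
          (continuous_snd.prodMk continuous_const).continuousAt
        exact (ContinuousAt.comp (f := fun p : ℝ × ℝ => (p.2, γ - 1)) h1 h2).continuousWithinAt
      · exact gammaContOn.comp continuous_snd.continuousOn (fun p hp => hp.2)
      · intro p hp
        exact (Real.Gamma_pos_of_pos (mem_Ioi.mp hp.2)).ne'
    have hmeasΦ : AEMeasurable Φ ((volume.restrict (Ioi 0)).prod (volume.restrict (Ioi 0))) := by
      rw [Measure.prod_restrict]
      exact ENNReal.measurable_ofReal.comp_aemeasurable
        (hcont.aemeasurable (measurableSet_Ioi.prod measurableSet_Ioi))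
    have hA : ∀ s : ℝ, 0 < s →
        ∫⁻ t in Ioi (0:ℝ), ENNReal.ofReal (Real.exp (-((1+x) * t)) * t ^ (s - 1))
          = ENNReal.ofReal ((1 / (1+x)) ^ s * Real.Gamma s) := by
      intro s hs
      have hint : IntegrableOn (fun t : ℝ => Real.exp (-((1+x)*t)) * t ^ (s-1)) (Ioi 0) :=
        (intOn hs h0x).congr_fun (fun t _ => mul_comm _ _) measurableSet_Ioi
      have hnn : 0 ≤ᵐ[volume.restrict (Ioi 0)]
          fun t : ℝ => Real.exp (-((1+x)*t)) * t ^ (s-1) :=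
        (ae_restrict_iff' measurableSet_Ioi).mpr (Filter.Eventually.of_forall fun t ht =>
          mul_nonneg (Real.exp_nonneg _) (Real.rpow_nonneg (le_of_lt ht) _))
      rw [← ofReal_integral_eq_lintegral_ofReal hint hnn]
      congr 1
      rw [← Real.integral_rpow_mul_exp_neg_mul_Ioi hs h0x]
      exact setIntegral_congr_fun measurableSet_Ioi fun t _ => mul_comm _ _
    have hInner : ∀ s ∈ Ioi (0:ℝ),
        (∫⁻ t in Ioi (0:ℝ), Φ (t, s)) = ENNReal.ofReal ((1+x) ^ (-s) * s ^ (γ - 1)) := by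
      intro s hs
      have hs' : (0:ℝ) < s := hs
      have hΓs : 0 < Real.Gamma s := Real.Gamma_pos_of_pos hs'
      have e1 : ∀ t : ℝ, t ∈ Ioi (0:ℝ) → Φ (t, s) =
          ENNReal.ofReal (Real.exp (-((1+x)*t)) * t ^ (s-1)) *
          ENNReal.ofReal (s ^ (γ-1) / Real.Gamma s) := by
        intro t ht
        rw [hΦ]
        exact ENNReal.ofReal_mul (mul_nonneg (Real.exp_nonneg _)
          (Real.rpow_nonneg (le_of_lt ht) _))
      rw [setLIntegral_congr_fun measurableSet_Ioi e1,
        lintegral_mul_const' _ _ ENNReal.ofReal_ne_top, hA s hs',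
        ← ENNReal.ofReal_mul (by positivity)]
      congr 1
      rw [one_div, Real.inv_rpow h0x.le, ← Real.rpow_neg h0x.le]
      field_simp
    have hsum : ∫⁻ s in Ioi (0:ℝ), ∫⁻ t in Ioi (0:ℝ), Φ (t, s)
        = ENNReal.ofReal (Real.Gamma γ * Real.log (1+x) ^ (-γ)) := by
      rw [setLIntegral_congr_fun measurableSet_Ioi
        (fun s hs => hInner s hs)]
      have hint0 : IntegrableOn (fun s : ℝ => (1+x) ^ (-s) * s ^ (γ-1)) (Ioi 0) := by
        have h := masterInt hγ h1x 0 0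
        refine h.congr_fun (fun s _ => ?_) measurableSet_Ioi
        simp
      rw [← ofReal_integral_eq_lintegral_ofReal hint0 ((ae_restrict_iff' measurableSet_Ioi).mpr
        (Filter.Eventually.of_forall fun s hs =>
          mul_nonneg (Real.rpow_nonneg h0x.le _) (Real.rpow_nonneg (le_of_lt hs) _)))]
      rw [repInt hγ hx]
    have hswap : ∫⁻ t in Ioi (0:ℝ), ∫⁻ s in Ioi (0:ℝ), Φ (t, s)
        = ∫⁻ s in Ioi (0:ℝ), ∫⁻ t in Ioi (0:ℝ), Φ (t, s) :=
      lintegral_lintegral_swap hmeasΦ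
    obtain ⟨Ψ, hΨmeas, hΨae⟩ := hmeasΦ
    have haeae := Measure.ae_ae_of_ae_prod hΨae
    have hTmeas : AEMeasurable (fun t : ℝ => ∫⁻ s in Ioi (0:ℝ), Φ (t, s))
        (volume.restrict (Ioi 0)) := by
      refine ⟨fun t => ∫⁻ s in Ioi (0:ℝ), Ψ (t, s), hΨmeas.lintegral_prod_right', ?_⟩
      filter_upwards [haeae] with t ht
      exact lintegral_congr_ae ht
    have hfin : (∫⁻ t in Ioi (0:ℝ), ∫⁻ s in Ioi (0:ℝ), Φ (t, s)) ≠ ⊤ := by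
      rw [hswap, hsum]; exact ENNReal.ofReal_ne_top
    have hTfin : ∀ᵐ t ∂(volume.restrict (Ioi 0)),
        (∫⁻ s in Ioi (0:ℝ), Φ (t, s)) < ⊤ := ae_lt_top' hTmeas hfin
    have heq : (fun t : ℝ => Real.exp (-x*t) * Real.exp (-t) *
        ∫ s in Ioi (0:ℝ), t ^ (s-1) * s ^ (γ-1) / Real.Gamma s)
        =ᵐ[volume.restrict (Ioi 0)]
        fun t => (∫⁻ s in Ioi (0:ℝ), Φ (t, s)).toReal := by
      filter_upwards [hTfin, self_mem_ae_restrict measurableSet_Ioi] with t htfin ht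
      have ht' : (0:ℝ) < t := ht
      have hTt : (∫⁻ s in Ioi (0:ℝ), Φ (t, s)) = ENNReal.ofReal (Real.exp (-((1+x)*t))) *
          ∫⁻ s in Ioi (0:ℝ), ENNReal.ofReal (t ^ (s-1) * s ^ (γ-1) / Real.Gamma s) := by
        rw [← lintegral_const_mul' _ _ ENNReal.ofReal_ne_top]
        refine setLIntegral_congr_fun measurableSet_Ioi
          (fun s hs => ?_)
        rw [hΦ]
        simp only
        rw [show Real.exp (-((1+x)*t)) * t ^ (s-1) * (s ^ (γ-1) / Real.Gamma s)
            = Real.exp (-((1+x)*t)) * (t ^ (s-1) * s ^ (γ-1) / Real.Gamma s) by ring,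
          ENNReal.ofReal_mul (Real.exp_nonneg _)]
      have hmeasInner : AEStronglyMeasurable
          (fun s : ℝ => t ^ (s-1) * s ^ (γ-1) / Real.Gamma s) (volume.restrict (Ioi 0)) := by
        refine ContinuousOn.aestronglyMeasurable ?_ measurableSet_Ioi
        refine ContinuousOn.div (ContinuousOn.mul ?_ ?_) gammaContOn ?_
        · have hrw : (fun s : ℝ => t ^ (s-1)) = fun s => Real.exp (Real.log t * (s-1)) := by
            funext s; rw [Real.rpow_def_of_pos ht']
          rw [hrw]
          exact (Real.continuous_exp.comp
            (continuous_const.mul (continuous_id.sub continuous_const))).continuousOn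
        · intro s hs
          have h1 : ContinuousAt (fun q : ℝ × ℝ => q.1 ^ q.2) (s, γ - 1) :=
            Real.continuousAt_rpow _ (Or.inl (mem_Ioi.mp hs).ne')
          have h2 : ContinuousAt (fun s : ℝ => (s, γ - 1)) s :=
            (continuous_id.prodMk continuous_const).continuousAt
          exact (ContinuousAt.comp (f := fun s : ℝ => (s, γ - 1)) h1 h2).continuousWithinAt
        · intro s hs
          exact (Real.Gamma_pos_of_pos (mem_Ioi.mp hs)).ne'
      have hnnInner : 0 ≤ᵐ[volume.restrict (Ioi 0)]
          fun s : ℝ => t ^ (s-1) * s ^ (γ-1) / Real.Gamma s :=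
        (ae_restrict_iff' measurableSet_Ioi).mpr (Filter.Eventually.of_forall fun s hs =>
          div_nonneg (mul_nonneg (Real.rpow_nonneg ht'.le _)
            (Real.rpow_nonneg (le_of_lt hs) _)) (Real.Gamma_pos_of_pos (mem_Ioi.mp hs)).le)
      rw [integral_eq_lintegral_of_nonneg_ae hnnInner hmeasInner, hTt,
        ENNReal.toReal_mul, ENNReal.toReal_ofReal (Real.exp_nonneg _),
        show Real.exp (-x*t) * Real.exp (-t) = Real.exp (-((1+x)*t)) by
          rw [← Real.exp_add]; congr 1; ring]
    have hRHS : (∫ t in Ioi (0:ℝ), Real.exp (-x*t) * Real.exp (-t) *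
        ∫ s in Ioi (0:ℝ), t ^ (s-1) * s ^ (γ-1) / Real.Gamma s)
        = Real.Gamma γ * Real.log (1+x) ^ (-γ) := by
      rw [integral_congr_ae heq, integral_toReal hTmeas hTfin, hswap, hsum,
        ENNReal.toReal_ofReal (mul_nonneg hΓγ.le (Real.rpow_nonneg hL.le _))]
    rw [hRHS, one_div, inv_mul_cancel_left₀ hΓγ.ne']
  · -- Part 2
    intro x hx
    have h1x : (1:ℝ) < 1 + x := by linarith [mem_Ioi.mp hx]
    have hlog : Real.log (1 + x) ≠ 0 := (Real.log_pos h1x).ne'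
    have hcl : ContDiffAt ℝ (⊤ : ℕ∞) (fun x : ℝ => Real.log (1 + x)) x :=
      (Real.contDiffAt_log.mpr (by linarith)).comp x (contDiffAt_const.add contDiffAt_id)
    exact ((Real.contDiffAt_rpow_const_of_ne hlog).comp x hcl).contDiffWithinAt
  · -- Part 3
    have hrep : ∀ n : ℕ, ∀ x ∈ Ioi (0:ℝ),
        iteratedDeriv n (fun x : ℝ => Real.log (1 + x) ^ (-γ)) x
          = ((-1) ^ n / Real.Gamma γ) * hfun γ n x := by
      intro n
      induction n with
      | zero =>
        intro x hx
        have hx' : (0:ℝ) < x := hx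
        simp only [iteratedDeriv_zero, pow_zero]
        have hval : hfun γ 0 x = Real.Gamma γ * Real.log (1 + x) ^ (-γ) := by
          rw [hfun, ← repInt hγ hx']
          refine setIntegral_congr_fun measurableSet_Ioi fun s _ => ?_
          simp
        rw [hval]
        field_simp
      | succ n ih =>
        intro x hx
        have hx' : (0:ℝ) < x := hx
        rw [iteratedDeriv_succ]
        have hev : (iteratedDeriv n (fun x : ℝ => Real.log (1+x) ^ (-γ)))
            =ᶠ[nhds x] fun y => ((-1)^n / Real.Gamma γ) * hfun γ n y :=
          Filter.eventuallyEq_of_mem (Ioi_mem_nhds hx') ih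
        rw [hev.deriv_eq, deriv_const_mul _ ((hfun_hasDerivAt hγ n hx').differentiableAt),
          (hfun_hasDerivAt hγ n hx').deriv, pow_succ]
        ring
    intro n x hx
    rw [hrep n x hx]
    have hh : 0 ≤ hfun γ n x := by
      refine setIntegral_nonneg measurableSet_Ioi fun s hs => ?_
      have hsp : (0:ℝ) < s := hs
      have h0 : (0:ℝ) < 1 + x := by linarith
      have hprod : 0 ≤ ∏ i ∈ Finset.range n, (s + (i:ℝ)) :=
        Finset.prod_nonneg fun i _ => by positivity
      exact mul_nonneg (mul_nonneg hprod (Real.rpow_nonneg h0.le _))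
        (Real.rpow_nonneg hsp.le _)
    have h1 : (-1:ℝ)^n * (-1:ℝ)^n = 1 := by
      rw [← mul_pow]; norm_num
    calc (0:ℝ) ≤ hfun γ n x / Real.Gamma γ := div_nonneg hh hΓγ.le
      _ = (-1:ℝ)^n * ((-1)^n / Real.Gamma γ * hfun γ n x) := by
          rw [show (-1:ℝ)^n * ((-1)^n / Real.Gamma γ * hfun γ n x)
              = ((-1:ℝ)^n * (-1)^n) * (hfun γ n x / Real.Gamma γ) by ring, h1, one_mul]
end

section
/- Let φ be a Bernstein function with φ(1) = 1, Lévy measure ν satisfying ν(dy) ≥ c y^{-1-α} dy for constants c > 0 and α ∈ (0,1), and let T be the associated discrete time subordinator. For θ > 0 and δ ∈ (0,1], there exists a constant C = C(θ,δ,c,α) > 0 such that E[exp(-θ T_n^δ)] ≤ exp(-C n^{δ/(α(1-δ)+δ)}) for all sufficiently large n. -/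
/-!
A step `R` of the discrete subordinator charges `m ≥ 1` at least as much as the mixed Poisson
law `∫ y^m/m! e^{-y} ν(dy)`. Averaging `1 - e^{-λm}` against a Poisson law of mean `y` gives
`1 - e^{-(1 - e^{-λ})y}`, so `1 - E e^{-λR} ≥ ∫ (1 - e^{-s y}) ν(dy)` with `s = 1 - e^{-λ}`, and
the lower bound `ν(dy) ≥ c y^{-1-α} dy`, used on `(1/s, ∞)` only, turns this into `≥ K λ^α` for
`λ ≤ 1`. By independence `E e^{-λ T_n} ≤ exp(-K n λ^α)`, and splitting according to `T_n ≥ r`,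
`E e^{-θ T_n^δ} ≤ e^{-θ r^δ} + e^{λ r} E e^{-λ T_n}`. Optimising over `r` and `λ` makes both
terms `exp(-C n^{δ/(α(1-δ)+δ)})`.
-/

open MeasureTheory Set ProbabilityTheory Filter
open scoped ENNReal

section

open Real
open scoped Nat

lemma mul_exp_neg_one_le_one_sub_exp_neg {x : ℝ} (hx0 : 0 ≤ x) (hx1 : x ≤ 1) :
    x * exp (-1) ≤ 1 - exp (-x) := by
  have h1 : x * exp (-1) ≤ x * exp (-x) := by gcongr
  have h2 : (1 + x) * exp (-x) ≤ 1 := by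
    calc (1 + x) * exp (-x) ≤ exp x * exp (-x) := by gcongr; linarith [add_one_le_exp x]
      _ = 1 := by rw [← exp_add, add_neg_cancel, exp_zero]
  linarith

lemma pow_div_factorial_mul_exp_neg_le_min {y : ℝ} (hy : 0 ≤ y) {m : ℕ} (hm : 1 ≤ m) :
    y ^ m / m ! * exp (-y) ≤ min 1 y := by
  rcases le_total y 1 with h | h
  · rw [min_eq_right h]
    calc y ^ m / m ! * exp (-y) ≤ y ^ m / 1 * 1 := by
          gcongr
          · exact_mod_cast m.factorial_pos
          · exact exp_le_one_iff.2 (neg_nonpos.2 hy)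
      _ ≤ y := by simpa using pow_le_of_le_one hy h (by omega)
  · rw [min_eq_left h]
    calc y ^ m / m ! * exp (-y) ≤ exp y * exp (-y) := by
          gcongr
          exact pow_div_factorial_le_exp _ hy m
      _ = 1 := by rw [← exp_add, add_neg_cancel, exp_zero]

lemma exp_neg_mul_rpow_le {θ δ lam r y : ℝ} (hθ : 0 ≤ θ) (hδ : 0 ≤ δ) (hlam : 0 ≤ lam)
    (hr : 0 ≤ r) (hy : 0 ≤ y) :
    exp (-θ * y ^ δ) ≤ exp (-θ * r ^ δ) + exp (lam * r) * exp (-lam * y) := by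
  rcases le_total r y with h | h
  · have : exp (-θ * y ^ δ) ≤ exp (-θ * r ^ δ) :=
      exp_le_exp.2 (by nlinarith [mul_le_mul_of_nonneg_left (rpow_le_rpow hr h hδ) hθ])
    linarith [mul_pos (exp_pos (lam * r)) (exp_pos (-lam * y))]
  · have h1 : exp (-θ * y ^ δ) ≤ 1 := exp_le_one_iff.2 (by nlinarith [rpow_nonneg hy δ])
    have h2 : 1 ≤ exp (lam * r) * exp (-lam * y) := by
      rw [← exp_add]; exact one_le_exp (by nlinarith)
    linarith [exp_pos (-θ * r ^ δ)]

lemma hasSum_one_sub_exp_neg_mul_poisson (lam y : ℝ) :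
    HasSum (fun m : ℕ => (1 - exp (-(lam * m))) * (y ^ m / m ! * exp (-y)))
      (1 - exp (-((1 - exp (-lam)) * y))) := by
  have h := ((NormedSpace.expSeries_div_hasSum_exp y).sub
    (NormedSpace.expSeries_div_hasSum_exp (exp (-lam) * y))).mul_right (exp (-y))
  rw [← exp_eq_exp_ℝ] at h
  have hterm (m : ℕ) : (1 - exp (-(lam * m))) * (y ^ m / m ! * exp (-y)) =
      (y ^ m / (m ! : ℝ) - (exp (-lam) * y) ^ m / m !) * exp (-y) := by
    rw [mul_pow, ← exp_nat_mul]
    ring_nf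
  have hsum : (exp y - exp (exp (-lam) * y)) * exp (-y) = 1 - exp (-((1 - exp (-lam)) * y)) := by
    rw [sub_mul, ← exp_add, ← exp_add, add_neg_cancel, exp_zero]
    ring_nf
  simp_rw [hterm, ← hsum]
  exact h

noncomputable def stableLevyMeasure (c α : ℝ) : Measure ℝ :=
  (volume.restrict (Ioi 0)).withDensity fun y => ENNReal.ofReal (c * y ^ (-1 - α))

lemma stableLevyMeasure_le_restrict {ν : Measure ℝ} {c α : ℝ}
    (h : ∀ s, MeasurableSet s → ∫⁻ y in s ∩ Ioi 0, ENNReal.ofReal (c * y ^ (-1 - α)) ≤ ν s) :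
    stableLevyMeasure c α ≤ ν.restrict (Ioi 0) := by
  refine Measure.le_iff.2 fun s hs => ?_
  rw [stableLevyMeasure, withDensity_apply _ hs, Measure.restrict_restrict hs,
    Measure.restrict_apply hs]
  simpa [inter_assoc] using h (s ∩ Ioi 0) (hs.inter measurableSet_Ioi)

lemma stableLevyMeasure_Ioi {c α a : ℝ} (hc : 0 ≤ c) (hα : 0 < α) (ha : 0 < a) :
    stableLevyMeasure c α (Ioi a) = ENNReal.ofReal (c * a ^ (-α) / α) := by
  have hint : IntegrableOn (fun y : ℝ => c * y ^ (-1 - α)) (Ioi a) :=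
    (integrableOn_Ioi_rpow_of_lt (by linarith) ha).const_mul c
  rw [stableLevyMeasure, withDensity_apply _ measurableSet_Ioi,
    Measure.restrict_restrict measurableSet_Ioi, Ioi_inter_Ioi, sup_of_le_left ha.le,
    ← ofReal_integral_eq_lintegral_ofReal hint, integral_const_mul,
    integral_Ioi_rpow_of_lt (by linarith) ha]
  · congr 1
    rw [show -1 - α + 1 = -α by ring]
    ring
  · filter_upwards [ae_restrict_mem measurableSet_Ioi] with y hy
    exact mul_nonneg hc (rpow_nonneg (ha.trans hy).le _)

lemma ofReal_le_lintegral_one_sub_exp_neg_stableLevyMeasure {c α s : ℝ} (hc : 0 ≤ c)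
    (hα : 0 < α) (hs : 0 < s) :
    ENNReal.ofReal (c * (1 - exp (-1)) / α * s ^ α) ≤
      ∫⁻ y, ENNReal.ofReal (1 - exp (-(s * y))) ∂stableLevyMeasure c α := by
  have htail : s⁻¹ ^ (-α) = s ^ α := by
    rw [rpow_neg (inv_nonneg.2 hs.le), inv_rpow hs.le, inv_inv]
  calc ENNReal.ofReal (c * (1 - exp (-1)) / α * s ^ α)
      = ∫⁻ _ in Ioi s⁻¹, ENNReal.ofReal (1 - exp (-1)) ∂stableLevyMeasure c α := by
        rw [setLIntegral_const, stableLevyMeasure_Ioi hc hα (inv_pos.2 hs), htail,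
          ← ENNReal.ofReal_mul (by linarith [exp_le_one_iff.2 (by norm_num : (-1:ℝ) ≤ 0)])]
        ring_nf
    _ ≤ ∫⁻ y in Ioi s⁻¹, ENNReal.ofReal (1 - exp (-(s * y))) ∂stableLevyMeasure c α := by
        refine setLIntegral_mono (by fun_prop) fun y hy => ENNReal.ofReal_le_ofReal ?_
        have : 1 < s * y := by rwa [mem_Ioi, inv_lt_iff_one_lt_mul₀ hs, mul_comm] at hy
        linarith [exp_le_exp.2 (neg_le_neg this.le)]
    _ ≤ _ := setLIntegral_le_lintegral _ _

lemma setLIntegral_one_sub_exp_neg_eq_tsum (ν : Measure ℝ) {lam : ℝ} (hlam : 0 ≤ lam) :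
    ∫⁻ y in Ioi 0, ENNReal.ofReal (1 - exp (-((1 - exp (-lam)) * y))) ∂ν =
      ∑' m : ℕ, ENNReal.ofReal (1 - exp (-(lam * m))) *
        ∫⁻ y in Ioi 0, ENNReal.ofReal (y ^ m / m ! * exp (-y)) ∂ν := by
  have hweight (m : ℕ) : 0 ≤ 1 - exp (-(lam * m)) := by
    have := exp_le_one_iff.2 (neg_nonpos.2 (mul_nonneg hlam m.cast_nonneg))
    linarith
  simp_rw [← lintegral_const_mul' _ _ ENNReal.ofReal_ne_top]
  rw [← lintegral_tsum fun m => by fun_prop]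
  refine setLIntegral_congr_fun measurableSet_Ioi fun y hy => ?_
  have hpoisson (m : ℕ) : 0 ≤ y ^ m / m ! * exp (-y) := by
    have : 0 ≤ y := le_of_lt hy
    positivity
  simp_rw [← ENNReal.ofReal_mul (hweight _)]
  rw [← ENNReal.ofReal_tsum_of_nonneg (fun m => mul_nonneg (hweight m) (hpoisson m))
    (hasSum_one_sub_exp_neg_mul_poisson lam y).summable,
    (hasSum_one_sub_exp_neg_mul_poisson lam y).tsum_eq]

lemma setLIntegral_ofReal_pow_div_factorial_mul_exp_neg {ν : Measure ℝ}
    (hν : ∫⁻ y in Ioi (0:ℝ), ENNReal.ofReal (min 1 y) ∂ν ≠ ⊤) {m : ℕ} (hm : 1 ≤ m) :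
    ∫⁻ y in Ioi 0, ENNReal.ofReal (y ^ m / m ! * exp (-y)) ∂ν =
      ENNReal.ofReal (1 / m ! * ∫ y in Ioi 0, y ^ m * exp (-y) ∂ν) := by
  have hnn : 0 ≤ᵐ[ν.restrict (Ioi 0)] fun y : ℝ => y ^ m / m ! * exp (-y) := by
    filter_upwards [ae_restrict_mem measurableSet_Ioi] with y hy
    have : 0 ≤ y := le_of_lt hy
    positivity
  have hint : IntegrableOn (fun y : ℝ => y ^ m / m ! * exp (-y)) (Ioi 0) ν := by
    refine ⟨by fun_prop, (hasFiniteIntegral_iff_ofReal hnn).2 (lt_of_le_of_lt ?_ hν.lt_top)⟩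
    exact setLIntegral_mono' measurableSet_Ioi fun y hy =>
      ENNReal.ofReal_le_ofReal (pow_div_factorial_mul_exp_neg_le_min (le_of_lt hy) hm)
  rw [← ofReal_integral_eq_lintegral_ofReal hint hnn, ← integral_const_mul]
  congr 2 with y
  ring

variable {Ω : Type*} [MeasurableSpace Ω] {μ : Measure Ω}

lemma lintegral_comp_eq_tsum {X : Ω → ℕ} (hX : Measurable X) (g : ℕ → ℝ≥0∞) :
    ∫⁻ ω, g (X ω) ∂μ = ∑' m, g m * μ {ω | X ω = m} := by
  rw [← lintegral_map measurable_from_nat hX, lintegral_countable']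
  simp_rw [Measure.map_apply hX (measurableSet_singleton _)]
  rfl

lemma ofReal_one_sub_mgf_neg [IsProbabilityMeasure μ] {Y : Ω → ℝ} (hY : Measurable Y)
    (hY0 : ∀ ω, 0 ≤ Y ω) {lam : ℝ} (hlam : 0 ≤ lam) :
    ENNReal.ofReal (1 - mgf Y μ (-lam)) = ∫⁻ ω, ENNReal.ofReal (1 - exp (-lam * Y ω)) ∂μ := by
  have hle (ω : Ω) : exp (-lam * Y ω) ≤ 1 :=
    exp_le_one_iff.2 (by nlinarith [hY0 ω])
  have hint : Integrable (fun ω => exp (-lam * Y ω)) μ :=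
    (integrable_const 1).mono' (by fun_prop) (ae_of_all _ fun ω => by
      rw [norm_of_nonneg (exp_pos _).le]; exact hle ω)
  have h : 1 - mgf Y μ (-lam) = ∫ ω, (1 - exp (-lam * Y ω)) ∂μ := by
    rw [integral_sub (integrable_const 1) hint]
    simp [mgf]
  exact h ▸ ofReal_integral_eq_lintegral_ofReal ((integrable_const 1).sub hint)
    (ae_of_all _ fun ω => sub_nonneg.2 (hle ω))

lemma mgf_neg_le_one [IsProbabilityMeasure μ] {Y : Ω → ℝ} (hY0 : ∀ ω, 0 ≤ Y ω) {lam : ℝ}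
    (hlam : 0 ≤ lam) : mgf Y μ (-lam) ≤ 1 := by
  calc mgf Y μ (-lam) ≤ mgf 0 μ (-lam) :=
        mgf_anti_of_nonpos (ae_of_all _ hY0) (neg_nonpos.2 hlam) (by simp)
    _ = 1 := by simp [mgf_zero_fun]

lemma mgf_natCast_sum_le_exp_neg {ι : Type*} {R : ι → Ω → ℕ} (hR : ∀ i, Measurable (R i))
    (hind : iIndepFun R μ) {t a : ℝ} (h : ∀ i, mgf (fun ω => (R i ω : ℝ)) μ t ≤ 1 - a)
    (s : Finset ι) :
    mgf (fun ω => ((∑ i ∈ s, R i ω : ℕ) : ℝ)) μ t ≤ exp (-a * s.card) := by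
  have hsum : (fun ω => ((∑ i ∈ s, R i ω : ℕ) : ℝ)) = ∑ i ∈ s, fun ω => (R i ω : ℝ) := by
    ext ω
    simp
  have hind' : iIndepFun (fun i ω => (R i ω : ℝ)) μ :=
    hind.comp (fun _ (m : ℕ) => (m : ℝ)) fun _ => measurable_from_nat
  rw [hsum, hind'.mgf_sum fun i => by fun_prop]
  calc ∏ i ∈ s, mgf (fun ω => (R i ω : ℝ)) μ t ≤ ∏ _i ∈ s, exp (-a) :=
        Finset.prod_le_prod (fun _ _ => mgf_nonneg) fun i _ => (h i).trans (one_sub_le_exp_neg a)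
    _ = exp (-a * s.card) := by rw [Finset.prod_const, ← exp_nat_mul]; ring_nf

lemma integral_exp_neg_mul_rpow_le [IsProbabilityMeasure μ] {Y : Ω → ℝ} (hY : Measurable Y)
    (hY0 : ∀ ω, 0 ≤ Y ω) {θ δ lam r : ℝ} (hθ : 0 ≤ θ) (hδ : 0 ≤ δ) (hlam : 0 ≤ lam)
    (hr : 0 ≤ r) :
    ∫ ω, exp (-θ * Y ω ^ δ) ∂μ ≤ exp (-θ * r ^ δ) + exp (lam * r) * mgf Y μ (-lam) := by
  have hint : Integrable (fun ω => exp (-lam * Y ω)) μ :=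
    (integrable_const 1).mono' (by fun_prop) (ae_of_all _ fun ω => by
      rw [norm_of_nonneg (exp_pos _).le]; exact exp_le_one_iff.2 (by nlinarith [hY0 ω]))
  calc ∫ ω, exp (-θ * Y ω ^ δ) ∂μ
      ≤ ∫ ω, (exp (-θ * r ^ δ) + exp (lam * r) * exp (-lam * Y ω)) ∂μ :=
        integral_mono_of_nonneg (ae_of_all _ fun _ => (exp_pos _).le)
          ((integrable_const _).add (hint.const_mul _))
          (ae_of_all _ fun ω => exp_neg_mul_rpow_le hθ hδ hlam hr (hY0 ω))
    _ = exp (-θ * r ^ δ) + exp (lam * r) * mgf Y μ (-lam) := by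
        rw [integral_add (integrable_const _) (hint.const_mul _), integral_const_mul]
        simp [mgf]

lemma mgf_neg_le_one_sub_mul_rpow [IsProbabilityMeasure μ] {ν : Measure ℝ} {c α : ℝ}
    (hc : 0 ≤ c) (hα : 0 < α)
    (hν : stableLevyMeasure c α ≤ ν.restrict (Ioi 0)) {X : Ω → ℕ} (hX : Measurable X)
    (hlaw : ∀ m, 1 ≤ m →
      ∫⁻ y in Ioi 0, ENNReal.ofReal (y ^ m / m ! * exp (-y)) ∂ν ≤ μ {ω | X ω = m})
    {lam : ℝ} (hlam : 0 < lam) :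
    mgf (fun ω => (X ω : ℝ)) μ (-lam) ≤ 1 - c * (1 - exp (-1)) / α * (1 - exp (-lam)) ^ α := by
  have hs : 0 < 1 - exp (-lam) := by linarith [exp_lt_one_iff.2 (neg_lt_zero.2 hlam)]
  have key : ENNReal.ofReal (c * (1 - exp (-1)) / α * (1 - exp (-lam)) ^ α) ≤
      ENNReal.ofReal (1 - mgf (fun ω => (X ω : ℝ)) μ (-lam)) := calc
    _ ≤ ∫⁻ y, ENNReal.ofReal (1 - exp (-((1 - exp (-lam)) * y))) ∂stableLevyMeasure c α :=
        ofReal_le_lintegral_one_sub_exp_neg_stableLevyMeasure hc hα hs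
    _ ≤ ∫⁻ y in Ioi 0, ENNReal.ofReal (1 - exp (-((1 - exp (-lam)) * y))) ∂ν :=
        lintegral_mono' hν le_rfl
    _ = ∑' m : ℕ, ENNReal.ofReal (1 - exp (-(lam * m))) *
          ∫⁻ y in Ioi 0, ENNReal.ofReal (y ^ m / m ! * exp (-y)) ∂ν :=
        setLIntegral_one_sub_exp_neg_eq_tsum ν hlam.le
    _ ≤ ∑' m : ℕ, ENNReal.ofReal (1 - exp (-(lam * m))) * μ {ω | X ω = m} := by
        refine ENNReal.tsum_le_tsum fun m => ?_
        rcases Nat.eq_zero_or_pos m with rfl | hm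
        · simp
        · exact mul_le_mul_right (hlaw m hm) _
    _ = ∫⁻ ω, ENNReal.ofReal (1 - exp (-lam * X ω)) ∂μ := by
        simp_rw [neg_mul]
        exact (lintegral_comp_eq_tsum hX fun m => ENNReal.ofReal (1 - exp (-(lam * m)))).symm
    _ = _ := (ofReal_one_sub_mgf_neg (by fun_prop) (fun ω => (X ω).cast_nonneg) hlam.le).symm
  have hle := mgf_neg_le_one (μ := μ) (fun ω => (X ω).cast_nonneg) hlam.le
  rw [ENNReal.ofReal_le_ofReal_iff (by linarith)] at key
  linarith

lemma mgf_neg_le_one_sub_mul_rpow_of_le_one [IsProbabilityMeasure μ] {ν : Measure ℝ}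
    {c α : ℝ} (hc : 0 ≤ c) (hα : 0 < α)
    (hν : stableLevyMeasure c α ≤ ν.restrict (Ioi 0)) {X : Ω → ℕ} (hX : Measurable X)
    (hlaw : ∀ m, 1 ≤ m →
      ∫⁻ y in Ioi 0, ENNReal.ofReal (y ^ m / m ! * exp (-y)) ∂ν ≤ μ {ω | X ω = m})
    {lam : ℝ} (hlam : lam ∈ Ioc (0:ℝ) 1) :
    mgf (fun ω => (X ω : ℝ)) μ (-lam) ≤
      1 - c * (1 - exp (-1)) / α * exp (-1) ^ α * lam ^ α := by
  have hK : 0 ≤ c * (1 - exp (-1)) / α :=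
    div_nonneg (mul_nonneg hc (by linarith [exp_le_one_iff.2 (by norm_num : (-1:ℝ) ≤ 0)])) hα.le
  have hs := rpow_le_rpow (mul_pos hlam.1 (exp_pos _)).le
    (mul_exp_neg_one_le_one_sub_exp_neg hlam.1.le hlam.2) hα.le
  rw [mul_rpow hlam.1.le (exp_pos _).le] at hs
  nlinarith [mgf_neg_le_one_sub_mul_rpow hc hα hν hX hlaw hlam.1, mul_le_mul_of_nonneg_left hs hK]

lemma exists_pos_le_one_le_mul_rpow {K α : ℝ} (hK : 0 < K) (hα : α < 1) :
    ∃ m : ℝ, 0 < m ∧ m ≤ 1 ∧ m ≤ K * m ^ α := by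
  set m := min 1 (K ^ (1 / (1 - α)))
  have hm0 : 0 < m := lt_min one_pos (by positivity)
  have hmK : m ^ (1 - α) ≤ K := calc
    m ^ (1 - α) ≤ (K ^ (1 / (1 - α))) ^ (1 - α) :=
      rpow_le_rpow hm0.le (min_le_right _ _) (by linarith)
    _ = K := by rw [← rpow_mul hK.le, one_div_mul_cancel (by linarith), rpow_one]
  refine ⟨m, hm0, min_le_left _ _, ?_⟩
  calc m = m ^ (1 - α) * m ^ α := by rw [← rpow_add hm0]; simp
    _ ≤ K * m ^ α := by gcongr

lemma exists_forall_le_two_mul_exp_neg_rpow {E : ℕ → ℝ} {K θ α δ : ℝ} (hK : 0 < K)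
    (hθ : 0 < θ) (hα0 : 0 < α) (hα1 : α < 1) (hδ0 : 0 < δ) (hδ1 : δ ≤ 1)
    (hE : ∀ n : ℕ, 1 ≤ n → ∀ lam ∈ Ioc (0:ℝ) 1, ∀ r, 0 < r →
      E n ≤ exp (-θ * r ^ δ) + exp (lam * r - K * lam ^ α * n)) :
    ∃ C, 0 < C ∧ ∀ n : ℕ, 1 ≤ n → E n ≤ 2 * exp (-C * (n:ℝ) ^ (δ / (α * (1 - δ) + δ))) := by
  set d := α * (1 - δ) + δ
  have hd0 : 0 < d := by nlinarith
  obtain ⟨m, hm0, hm1, hmK⟩ := exists_pos_le_one_le_mul_rpow (half_pos hK) hα1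
  refine ⟨min θ (K / 2 * m ^ α), lt_min hθ (by positivity), fun n hn => ?_⟩
  have hn0 : (0:ℝ) < n := by exact_mod_cast hn
  -- the choice `r = n^(1/d)`, `λ = m n^((δ-1)/d)` balances both terms at order `n^(δ/d)`
  set lam := m * (n:ℝ) ^ ((δ - 1) / d)
  have hlam1 : lam ≤ 1 := mul_le_one₀ hm1 (by positivity) (rpow_le_one_of_one_le_of_nonpos
    (by exact_mod_cast hn) (div_nonpos_of_nonpos_of_nonneg (by linarith) hd0.le))
  have h1 : ((n:ℝ) ^ (1 / d)) ^ δ = (n:ℝ) ^ (δ / d) := by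
    rw [← rpow_mul hn0.le]; ring_nf
  have h2 : lam * (n:ℝ) ^ (1 / d) = m * (n:ℝ) ^ (δ / d) := by
    rw [mul_assoc, ← rpow_add hn0]; ring_nf
  have h3 : lam ^ α * n = m ^ α * (n:ℝ) ^ (δ / d) := by
    rw [mul_rpow hm0.le (by positivity), ← rpow_mul hn0.le, mul_assoc, ← rpow_add_one hn0.ne']
    congr 2
    field_simp
    ring
  have hx : 0 ≤ (n:ℝ) ^ (δ / d) := by positivity
  calc E n ≤ exp (-θ * ((n:ℝ) ^ (1 / d)) ^ δ) + exp (lam * (n:ℝ) ^ (1 / d) - K * lam ^ α * n) :=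
        hE n hn lam ⟨by positivity, hlam1⟩ _ (by positivity)
    _ ≤ exp (-min θ (K / 2 * m ^ α) * (n:ℝ) ^ (δ / d)) +
        exp (-min θ (K / 2 * m ^ α) * (n:ℝ) ^ (δ / d)) := by
        rw [h1, h2, mul_assoc K, h3]
        gcongr <;> nlinarith [min_le_left θ (K / 2 * m ^ α), min_le_right θ (K / 2 * m ^ α)]
    _ = _ := by ring

lemma eventually_two_mul_exp_neg_rpow_le {C β : ℝ} (hC : 0 < C) (hβ : 0 < β) :
    ∀ᶠ n : ℕ in atTop, 2 * exp (-C * (n:ℝ) ^ β) ≤ exp (-(C / 2) * (n:ℝ) ^ β) := by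
  have hlim := (tendsto_rpow_atTop hβ).comp tendsto_natCast_atTop_atTop
  filter_upwards [hlim.eventually_ge_atTop (2 * log 2 / C)] with n hn
  rw [Function.comp_apply, div_le_iff₀ hC] at hn
  calc 2 * exp (-C * (n:ℝ) ^ β) = exp (log 2 - C * (n:ℝ) ^ β) := by
        rw [exp_sub, exp_log two_pos, neg_mul, exp_neg, div_eq_mul_inv]
    _ ≤ _ := exp_le_exp.2 (by linarith)

end

theorem subexponential_moment_estimate_general
    (b : ℝ) (hb : 0 ≤ b) (ν : Measure ℝ)
    (hν : ∫⁻ y in Ioi (0:ℝ), ENNReal.ofReal (min 1 y) ∂ν ≠ ⊤)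
    (cφ : ℕ → ℝ)
    (hcφ : ∀ m : ℕ, 1 ≤ m → cφ m =
      (1 / (Nat.factorial m : ℝ)) * ∫ y in Ioi (0:ℝ), y ^ m * Real.exp (-y) ∂ν
        + if m = 1 then b else 0)
    {Ω : Type*} [MeasurableSpace Ω] (μ : Measure Ω) [IsProbabilityMeasure μ]
    (R : ℕ → Ω → ℕ) (hR : ∀ k, Measurable (R k))
    (hRindep : iIndepFun R μ)
    (hRlaw : ∀ k, ∀ m : ℕ, 1 ≤ m → μ {ω | R k ω = m} = ENNReal.ofReal (cφ m))
    (T : ℕ → Ω → ℕ) (hT : ∀ n ω, T n ω = ∑ k ∈ Finset.range n, R k ω)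
    (c α : ℝ) (hc : 0 < c) (hα0 : 0 < α) (hα1 : α < 1)
    (hνlower : ∀ s : Set ℝ, MeasurableSet s →
      ∫⁻ y in s ∩ Ioi (0:ℝ), ENNReal.ofReal (c * y ^ (-1 - α)) ≤ ν s)
    (θ δ : ℝ) (hθ : 0 < θ) (hδ0 : 0 < δ) (hδ1 : δ ≤ 1) :
    ∃ C : ℝ, 0 < C ∧ ∃ N : ℕ, ∀ n : ℕ, N ≤ n →
      ∫ ω, Real.exp (-θ * (T n ω : ℝ) ^ δ) ∂μ ≤
        Real.exp (-C * (n : ℝ) ^ (δ / (α * (1 - δ) + δ))) := by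
  obtain rfl : T = fun n ω => ∑ k ∈ Finset.range n, R k ω := funext fun n => funext (hT n)
  have hlaw (k m : ℕ) (hm : 1 ≤ m) :
      ∫⁻ y in Ioi 0, ENNReal.ofReal (y ^ m / m.factorial * Real.exp (-y)) ∂ν ≤
        μ {ω | R k ω = m} := by
    rw [setLIntegral_ofReal_pow_div_factorial_mul_exp_neg hν hm, hRlaw k m hm, hcφ m hm]
    exact ENNReal.ofReal_le_ofReal (le_add_of_nonneg_right (by split_ifs <;> simp [hb]))
  set K := c * (1 - Real.exp (-1)) / α * Real.exp (-1) ^ α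
  have hK : 0 < K := mul_pos (div_pos (mul_pos hc
    (by linarith [Real.exp_lt_one_iff.2 (neg_one_lt_zero : (-1:ℝ) < 0)])) hα0) (by positivity)
  have hmgf (n : ℕ) {lam : ℝ} (hlam : lam ∈ Ioc (0:ℝ) 1) :
      mgf (fun ω => ((∑ k ∈ Finset.range n, R k ω : ℕ) : ℝ)) μ (-lam) ≤
        Real.exp (-(K * lam ^ α) * n) := by
    simpa using mgf_natCast_sum_le_exp_neg hR hRindep (fun k =>
      mgf_neg_le_one_sub_mul_rpow_of_le_one hc.le hα0 (stableLevyMeasure_le_restrict hνlower)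
        (hR k) (hlaw k) hlam) (Finset.range n)
  obtain ⟨C, hC, hE⟩ := exists_forall_le_two_mul_exp_neg_rpow hK hθ hα0 hα1 hδ0 hδ1
    (E := fun n => ∫ ω, Real.exp (-θ * ((∑ k ∈ Finset.range n, R k ω : ℕ) : ℝ) ^ δ) ∂μ)
    fun n _ lam hlam r hr => by
      refine (integral_exp_neg_mul_rpow_le (by fun_prop) (fun ω => Nat.cast_nonneg _) hθ.le
        hδ0.le hlam.1.le hr.le).trans ?_
      rw [sub_eq_add_neg, Real.exp_add]
      gcongr
      exact (hmgf n hlam).trans_eq (by ring_nf)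
  obtain ⟨N, hN⟩ := eventually_atTop.1 (eventually_two_mul_exp_neg_rpow_le hC
    (div_pos hδ0 (by nlinarith) : 0 < δ / (α * (1 - δ) + δ)))
  exact ⟨C / 2, half_pos hC, max N 1, fun n hn =>
    (hE n (le_of_max_le_right hn)).trans (hN n (le_of_max_le_left hn))⟩

theorem subexponential_moment_estimate
    (b : ℝ) (hb : 0 ≤ b) (ν : Measure ℝ)
    (hν : ∫⁻ y in Ioi (0:ℝ), ENNReal.ofReal (min 1 y) ∂ν ≠ ⊤)
    (φ : ℝ → ℝ)
    (hφ : ∀ x : ℝ, 0 ≤ x → φ x = b * x + ∫ y in Ioi (0:ℝ), (1 - Real.exp (-x * y)) ∂ν)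
    (hφ1 : φ 1 = 1)
    (cφ : ℕ → ℝ)
    (hcφ : ∀ m : ℕ, 1 ≤ m → cφ m =
      (1 / (Nat.factorial m : ℝ)) * ∫ y in Ioi (0:ℝ), y ^ m * Real.exp (-y) ∂ν
        + if m = 1 then b else 0)
    {Ω : Type*} [MeasurableSpace Ω] (μ : Measure Ω) [IsProbabilityMeasure μ]
    (R : ℕ → Ω → ℕ) (hR : ∀ k, Measurable (R k))
    (hRindep : iIndepFun R μ)
    (hRpos : ∀ k ω, 1 ≤ R k ω)
    (hRlaw : ∀ k, ∀ m : ℕ, 1 ≤ m → μ {ω | R k ω = m} = ENNReal.ofReal (cφ m))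
    (T : ℕ → Ω → ℕ) (hT : ∀ n ω, T n ω = ∑ k ∈ Finset.range n, R k ω)
    (c α : ℝ) (hc : 0 < c) (hα0 : 0 < α) (hα1 : α < 1)
    (hνlower : ∀ s : Set ℝ, MeasurableSet s →
      ∫⁻ y in s ∩ Ioi (0:ℝ), ENNReal.ofReal (c * y ^ (-1 - α)) ≤ ν s)
    (θ δ : ℝ) (hθ : 0 < θ) (hδ0 : 0 < δ) (hδ1 : δ ≤ 1) :
    ∃ C : ℝ, 0 < C ∧ ∃ N : ℕ, ∀ n : ℕ, N ≤ n →
      ∫ ω, Real.exp (-θ * (T n ω : ℝ) ^ δ) ∂μ ≤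
        Real.exp (-C * (n : ℝ) ^ (δ / (α * (1 - δ) + δ))) :=
  subexponential_moment_estimate_general b hb ν hν cφ hcφ μ R hR hRindep hRlaw T hT c α hc hα0 hα1
    hνlower θ δ hθ hδ0 hδ1
end

section
/- Let φ be a Bernstein function. If limsup_{x↓0} φ(λ₀ x)/φ(x) > 1 for some λ₀ > 1, then limsup_{x↓0} φ(λ x)/φ(x) > 1 for all λ > 1. -/
open Set Filter

theorem limsup_scaling_all_lambda (φ : ℝ → ℝ)
    (hsmooth : ContDiffOn ℝ (⊤ : ℕ∞) φ (Ioi 0))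
    (hnn : ∀ x : ℝ, 0 < x → 0 ≤ φ x)
    (hbern : ∀ n : ℕ, 1 ≤ n → ∀ x : ℝ, 0 < x →
      0 ≤ (-1 : ℝ) ^ (n - 1) * iteratedDeriv n φ x)
    (l₀ : ℝ) (hl₀ : 1 < l₀)
    (h : 1 < limsup (fun x : ℝ => φ (l₀ * x) / φ x) (nhdsWithin 0 (Ioi 0))) :
    ∀ l : ℝ, 1 < l →
      1 < limsup (fun x : ℝ => φ (l * x) / φ x) (nhdsWithin 0 (Ioi 0)) := by
  intro l hl
  have hio : IsOpen (Ioi (0:ℝ)) := isOpen_Ioi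
  have hsm : ContDiffOn ℝ (⊤ : ℕ∞) φ (Ioi 0) := hsmooth.of_le (by simp)
  rw [contDiffOn_infty_iff_deriv_of_isOpen hio] at hsm
  obtain ⟨hdiff, hsm'⟩ := hsm
  have hdiff2 : DifferentiableOn ℝ (deriv φ) (Ioi (0:ℝ)) := hsm'.differentiableOn (by norm_num)
  have hint : interior (Ioi (0:ℝ)) = Ioi 0 := interior_Ioi
  have hmono : MonotoneOn φ (Ioi (0:ℝ)) := by
    refine monotoneOn_of_deriv_nonneg (convex_Ioi 0) hsmooth.continuousOn
      (by rw [hint]; exact hdiff) ?_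
    intro x hx
    rw [hint] at hx
    have := hbern 1 le_rfl x hx
    simpa [iteratedDeriv_one] using this
  have hconc : ConcaveOn ℝ (Ioi (0:ℝ)) φ := by
    refine concaveOn_of_deriv2_nonpos (convex_Ioi 0) hsmooth.continuousOn
      (by rw [hint]; exact hdiff) (by rw [hint]; exact hdiff2) ?_
    intro x hx
    rw [hint] at hx
    have h1 := hbern 2 (by norm_num) x hx
    have h2 : iteratedDeriv 2 φ x = deriv (deriv φ) x := by
      rw [iteratedDeriv_succ, iteratedDeriv_one]
    have e : deriv^[2] φ x = deriv (deriv φ) x := by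
      rw [Function.iterate_succ_apply, Function.iterate_one]
    rw [e, ← h2]
    norm_num at h1
    linarith
  -- key concavity bound : φ (c * x) ≤ (2c-1) φ x
  have key : ∀ c : ℝ, 1 < c → ∀ x : ℝ, 0 < x → φ (c * x) ≤ (2 * c - 1) * φ x := by
    intro c hc x hx
    have hc1 : (0:ℝ) < 2 * c - 1 := by linarith
    set θ : ℝ := 1 / (2 * c - 1) with hθ
    have hθ0 : 0 < θ := by positivity
    have hθ1 : θ ≤ 1 := by
      rw [hθ, div_le_one hc1]; linarith
    have hx2 : x / 2 ∈ Ioi (0:ℝ) := by simp; positivity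
    have hcx : c * x ∈ Ioi (0:ℝ) := by simp; positivity
    have hcomb := hconc.2 hx2 hcx (show (0:ℝ) ≤ 1 - θ by linarith) (le_of_lt hθ0)
      (show (1 - θ) + θ = 1 by ring)
    have hpt : (1 - θ) • (x / 2) + θ • (c * x) = x := by
      simp only [smul_eq_mul, hθ]
      field_simp
      ring
    rw [hpt] at hcomb
    have h0 : 0 ≤ φ (x / 2) := hnn _ (by positivity)
    have : θ * φ (c * x) ≤ φ x := by
      simp only [smul_eq_mul] at hcomb
      nlinarith
    calc φ (c * x) = (2 * c - 1) * (θ * φ (c * x)) := by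
          rw [hθ]; field_simp; rw [mul_div_assoc, div_self (ne_of_gt (by linarith)), mul_one]
      _ ≤ (2 * c - 1) * φ x := by
          exact mul_le_mul_of_nonneg_left this (le_of_lt hc1)
  -- degenerate case: φ vanishes somewhere on (0,∞)
  by_cases hpos : ∀ x : ℝ, 0 < x → 0 < φ x
  swap
  · exfalso
    push_neg at hpos
    obtain ⟨a, ha, hφa⟩ := hpos
    have hφa0 : φ a = 0 := le_antisymm hφa (hnn a ha)
    have hev : ∀ᶠ x in nhdsWithin (0:ℝ) (Ioi 0), φ (l₀ * x) / φ x ≤ 0 := by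
      have hmem : Ioo (0:ℝ) (a / l₀) ∈ nhdsWithin (0:ℝ) (Ioi 0) :=
        Ioo_mem_nhdsGT_of_mem (by constructor <;> [rfl; positivity])
      filter_upwards [hmem] with x hx
      have hx0 : 0 < x := hx.1
      have hle : l₀ * x ≤ a := by
        have h2 := hx.2
        rw [lt_div_iff₀ (show (0:ℝ) < l₀ by linarith)] at h2
        nlinarith
      have hz : φ (l₀ * x) = 0 := by
        refine le_antisymm ?_ (hnn _ (by positivity))
        have := hmono (by simp; positivity : l₀ * x ∈ Ioi (0:ℝ)) (by simpa using ha) hle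
        rwa [hφa0] at this
      simp [hz]
    have hev0 : ∀ᶠ x in nhdsWithin (0:ℝ) (Ioi 0), (0:ℝ) ≤ φ (l₀ * x) / φ x := by
      filter_upwards [self_mem_nhdsWithin] with x hx
      have hx0 : (0:ℝ) < x := hx
      exact div_nonneg (hnn _ (by positivity)) (hnn _ hx0)
    have hcb : IsCoboundedUnder (· ≤ ·) (nhdsWithin (0:ℝ) (Ioi 0))
        (fun x : ℝ => φ (l₀ * x) / φ x) :=
      isCoboundedUnder_le_of_eventually_le _ hev0
    have := limsup_le_of_le hcb hev
    linarith
  -- main case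
  by_contra hcon
  push_neg at hcon
  obtain ⟨n, hn⟩ : ∃ n : ℕ, l₀ ≤ l ^ n := by
    obtain ⟨n, hn⟩ := pow_unbounded_of_one_lt l₀ hl
    exact ⟨n, le_of_lt hn⟩
  -- choose ε > 0 with (1+ε)^n < limsup for l₀
  have htend : Tendsto (fun ε : ℝ => (1 + ε) ^ n) (nhdsWithin 0 (Ioi 0)) (nhds 1) := by
    have : Tendsto (fun ε : ℝ => (1 + ε) ^ n) (nhds 0) (nhds ((1 + 0) ^ n)) := by
      exact ((continuous_const.add continuous_id).pow n).tendsto 0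
    simpa using this.mono_left nhdsWithin_le_nhds
  obtain ⟨ε, hεlt, hε0⟩ := ((htend.eventually (gt_mem_nhds h)).and self_mem_nhdsWithin).exists
  have hε0 : (0:ℝ) < ε := hε0
  -- bound above for the ratio with factor l
  have hbdd : IsBoundedUnder (· ≤ ·) (nhdsWithin (0:ℝ) (Ioi 0))
      (fun x : ℝ => φ (l * x) / φ x) := by
    refine ⟨2 * l - 1, eventually_map.mpr ?_⟩
    filter_upwards [self_mem_nhdsWithin] with x hx
    have hx0 : (0:ℝ) < x := hx
    have := key l hl x hx0
    rw [div_le_iff₀ (hpos x hx0)]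
    linarith [this]
  have hev : ∀ᶠ x in nhdsWithin (0:ℝ) (Ioi 0), φ (l * x) / φ x < 1 + ε :=
    eventually_lt_of_limsup_lt (lt_of_le_of_lt hcon (by linarith)) hbdd
  have hev' : ∀ᶠ x in nhdsWithin (0:ℝ) (Ioi 0), φ (l * x) ≤ (1 + ε) * φ x := by
    filter_upwards [hev, self_mem_nhdsWithin] with x hx hx0
    have : (0:ℝ) < x := hx0
    rw [div_lt_iff₀ (hpos x this)] at hx
    linarith
  rw [eventually_iff_exists_mem] at hev'
  obtain ⟨s, hs, hstep0⟩ := hev'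
  rw [mem_nhdsGT_iff_exists_Ioo_subset] at hs
  obtain ⟨δ, hδ, hsub⟩ := hs
  have hδ0 : (0:ℝ) < δ := hδ
  have hstep : ∀ y : ℝ, 0 < y → y < δ → φ (l * y) ≤ (1 + ε) * φ y := fun y h1 h2 =>
    hstep0 y (hsub ⟨h1, h2⟩)
  have hl0 : (0:ℝ) < l := by linarith
  -- iterate the step bound
  have hiter : ∀ k : ℕ, ∀ x : ℝ, 0 < x → l ^ k * x < δ → φ (l ^ k * x) ≤ (1 + ε) ^ k * φ x := by
    intro k
    induction k with
    | zero => intro x hx _; simp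
    | succ k ih =>
      intro x hx hlt
      have hpow : (0:ℝ) < l ^ k := by positivity
      have h1 : l ^ k * x < l ^ (k + 1) * x := by
        rw [pow_succ]
        nlinarith [mul_pos hpow hx, mul_lt_mul_of_pos_left hl (mul_pos hpow hx)]
      have h2 : l ^ k * x < δ := lt_trans h1 hlt
      have h3 : φ (l ^ (k + 1) * x) ≤ (1 + ε) * φ (l ^ k * x) := by
        have := hstep (l ^ k * x) (by positivity) h2
        have e : l * (l ^ k * x) = l ^ (k + 1) * x := by ring
        rwa [e] at this
      calc φ (l ^ (k + 1) * x) ≤ (1 + ε) * φ (l ^ k * x) := h3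
        _ ≤ (1 + ε) * ((1 + ε) ^ k * φ x) :=
            mul_le_mul_of_nonneg_left (ih x hx h2) (by linarith)
        _ = (1 + ε) ^ (k + 1) * φ x := by ring
  -- conclude the bound on the l₀ ratio
  have hfin : ∀ᶠ x in nhdsWithin (0:ℝ) (Ioi 0), φ (l₀ * x) / φ x ≤ (1 + ε) ^ n := by
    have hpown : (0:ℝ) < l ^ n := by positivity
    have hmem : Ioo (0:ℝ) (δ / l ^ n) ∈ nhdsWithin (0:ℝ) (Ioi 0) :=
      Ioo_mem_nhdsGT_of_mem (by constructor <;> [rfl; positivity])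
    filter_upwards [hmem] with x hx
    have hx0 : 0 < x := hx.1
    have hxδ : l ^ n * x < δ := by
      have := hx.2
      rw [lt_div_iff₀ hpown] at this
      nlinarith
    have hA : φ (l₀ * x) ≤ φ (l ^ n * x) := by
      refine hmono (by simp; positivity) (by simp; positivity) ?_
      nlinarith
    have hB : φ (l ^ n * x) ≤ (1 + ε) ^ n * φ x := hiter n x hx0 hxδ
    rw [div_le_iff₀ (hpos x hx0)]
    linarith
  have hfin0 : ∀ᶠ x in nhdsWithin (0:ℝ) (Ioi 0), (0:ℝ) ≤ φ (l₀ * x) / φ x := by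
    filter_upwards [self_mem_nhdsWithin] with x hx
    have hx0 : (0:ℝ) < x := hx
    exact div_nonneg (hnn _ (by positivity)) (hnn _ hx0)
  have hcb : IsCoboundedUnder (· ≤ ·) (nhdsWithin (0:ℝ) (Ioi 0))
      (fun x : ℝ => φ (l₀ * x) / φ x) :=
    isCoboundedUnder_le_of_eventually_le _ hfin0
  have := limsup_le_of_le hcb hfin
  linarith
end
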